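/- arXiv:2406.08916 — 11 statements merged into one kernel-verified Lean document; each statement's English description precedes it below -/
import Mathlib

section
/- Let S_0, ..., S_{k-1} be additive subgroups of F_{q^h}, let a_1, ..., a_{q^h} enumerate the elements of F_{q^h}, and let C = {(f(a_1), ..., f(a_{q^h}), c_{k-1}) : f(x) = Σ_{i=0}^{k-1} c_i x^i, c_i ∈ S_i} ⊆ (F_{q^h})^{q^h + 1}. Then C is an additive code of size Π|S_i| with minimum distance at least n - (k-1) where n = q^h + 1; moreover if q^{(k-1)h} < Π_{i=0}^{k-1}|S_i| < q^{kh} then C attains the fractional Singleton bound ⌈r/h⌉ = n - d + 1 (where |C| = q^r). -/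
/-!
Writing a codeword as the values of `f = ∑ cᵢ Xⁱ` at all points of the field, followed by
`c_{k-1}` (the value of `f` at infinity), a nonzero codeword has at most `k - 1` zero
coordinates: `deg f ≤ k - 1` bounds the finite zeros, and when `c_{k-1} = 0` the degree drops
by one, paying for the zero at infinity. So the weight is at least `n - (k - 1)`, which also makes
the encoding injective and gives `|C| = ∏ |Sᵢ|`. On the other hand, two codewords agreeing on
`n - d + 1` coordinates coincide, so `q ^ r ≤ q ^ (h (n - d + 1))` (Singleton). Combined with
`(k - 1) h < r < k h` this forces `d = n - k + 1` and `⌈r / h⌉ = k = n - d + 1`.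
-/

open Finset Polynomial

theorem hammingNorm_add_card_filter_eq_zero {ι β : Type*} [Fintype ι] [Zero β] [DecidableEq β]
    (f : ι → β) : hammingNorm f + #{i | f i = 0} = Fintype.card ι := by
  simpa only [hammingNorm, ne_eq, add_comm, card_univ] using
    card_filter_add_card_filter_not (s := univ) (fun i => f i = 0)

theorem hammingNorm_snoc {β : Type*} [Zero β] [DecidableEq β] {n : ℕ} (f : Fin n → β) (a : β) :
    hammingNorm (Fin.snoc f a : Fin (n + 1) → β) = hammingNorm f + if a = 0 then 0 else 1 := by
  simp [hammingNorm, card_filter, Fin.sum_univ_castSucc]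

theorem card_le_card_pow_of_le_hammingDist {ι α : Type*} [Fintype ι] [Fintype α]
    [DecidableEq α] {C : Set (ι → α)} {d : ℕ}
    (hC : ∀ u ∈ C, ∀ v ∈ C, u ≠ v → d ≤ hammingDist u v) :
    Nat.card C ≤ Fintype.card α ^ (Fintype.card ι - (d - 1)) := by
  classical
  rcases Nat.eq_zero_or_pos d with rfl | hd
  · simpa using Finite.card_subtype_le (· ∈ C)
  obtain ⟨s, -, hs⟩ := exists_subset_card_eq (s := (univ : Finset ι))
    (n := Fintype.card ι - (d - 1)) (by simp)
  have hinj : Set.InjOn (fun v : ι → α => fun i : s => v i) C := by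
    intro u hu v hv huv
    by_contra hne
    have hdist : hammingDist u v ≤ #sᶜ :=
      card_le_card fun i hi => by
        simp only [mem_filter, mem_univ, true_and, mem_compl] at hi ⊢
        exact fun his => hi (congrFun huv ⟨i, his⟩)
    have := hC u hu v hv hne
    rw [card_compl] at hdist
    omega
  calc Nat.card C ≤ Nat.card (s → α) := Nat.card_le_card_of_injective _ hinj.injective
    _ = Fintype.card α ^ (Fintype.card ι - (d - 1)) := by simp [hs]

theorem AddSubgroup.card_le_card_pow_of_le_hammingNorm {ι α : Type*} [Fintype ι] [Fintype α]
    [AddGroup α] [DecidableEq α] {C : AddSubgroup (ι → α)} {d : ℕ}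
    (hC : ∀ v ∈ C, v ≠ 0 → d ≤ hammingNorm v) :
    Nat.card C ≤ Fintype.card α ^ (Fintype.card ι - (d - 1)) :=
  card_le_card_pow_of_le_hammingDist fun u hu v hv huv => by
    rw [hammingDist_eq_hammingNorm]
    exact hC _ (C.add_mem (C.neg_mem hu) hv) (by rwa [ne_eq, neg_add_eq_zero])

theorem AddSubgroup.card_pi_univ {ι : Type*} [Fintype ι] {G : ι → Type*} [∀ i, AddGroup (G i)]
    (S : ∀ i, AddSubgroup (G i)) : Nat.card (AddSubgroup.pi Set.univ S) = ∏ i, Nat.card (S i) := by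
  rw [← Nat.card_pi]
  exact Nat.card_congr <|
    (Equiv.subtypeEquivRight fun _ => by simp [AddSubgroup.mem_pi]).trans Equiv.subtypePiEquivPi

theorem ceil_div_eq_of_lt_of_le {h k r : ℕ} (hlt : (k - 1) * h < r) (hle : r ≤ k * h) :
    ⌈(r : ℚ) / h⌉ = k := by
  have hh : (0 : ℚ) < h := by
    exact_mod_cast Nat.pos_of_ne_zero (by rintro rfl; omega)
  have hk : 1 ≤ k := by rcases k with _ | k <;> simp_all
  rw [Int.ceil_eq_iff, lt_div_iff₀ hh, div_le_iff₀ hh]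
  have hlt' : ((k - 1 : ℕ) : ℚ) * h < r := by exact_mod_cast hlt
  rw [Nat.cast_sub hk, Nat.cast_one] at hlt'
  exact ⟨by push_cast; exact hlt', by push_cast; exact_mod_cast hle⟩

namespace Polynomial

variable {R : Type*}

theorem eval_ofFn [CommSemiring R] [DecidableEq R] {k : ℕ} (c : Fin k → R) (x : R) :
    (ofFn k c).eval x = ∑ i, c i * x ^ (i : ℕ) := by
  simp [ofFn_eq_sum_monomial, eval_finsetSum]

theorem natDegree_ofFn_le [Semiring R] [DecidableEq R] {k : ℕ} (c : Fin k → R) :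
    (ofFn k c).natDegree ≤ k - 1 := by
  rcases k with _ | k
  · simp
  · exact Nat.le_sub_one_of_lt (ofFn_natDegree_lt k.succ_pos c)

theorem card_filter_eval_eq_zero_le [CommRing R] [IsDomain R] [DecidableEq R] {n : ℕ}
    {e : Fin n → R} (he : Function.Injective e) {p : R[X]} (hp : p ≠ 0) :
    #{j | p.eval (e j) = 0} ≤ p.natDegree := by
  rw [← card_map ⟨e, he⟩]
  refine card_le_degree_of_subset_roots fun x hx => ?_
  obtain ⟨j, hj, rfl⟩ := mem_map.mp (mem_val.mp hx)
  exact (mem_roots hp).mpr (mem_filter.mp hj).2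

/-- On polynomials of degree at most `m`, the last coordinate is the evaluation at infinity. -/
def extendedEval [CommSemiring R] {n : ℕ} (e : Fin n → R) (m : ℕ) :
    R[X] →ₗ[R] Fin (n + 1) → R where
  toFun p := Fin.snoc (fun j => p.eval (e j)) (p.coeff m)
  map_add' p p' := by
    ext j
    refine Fin.lastCases ?_ (fun j => ?_) j <;> simp
  map_smul' a p := by
    ext j
    refine Fin.lastCases ?_ (fun j => ?_) j <;> simp

theorem extendedEval_apply [CommSemiring R] {n : ℕ} (e : Fin n → R) (m : ℕ) (p : R[X]) :
    extendedEval e m p = Fin.snoc (fun j => p.eval (e j)) (p.coeff m) := rfl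

theorem extendedEval_eq_iff [CommSemiring R] {n m : ℕ} (e : Fin n → R) (p : R[X])
    (v : Fin (n + 1) → R) : extendedEval e m p = v ↔
      (∀ j, v (Fin.castSucc j) = p.eval (e j)) ∧ v (Fin.last n) = p.coeff m := by
  rw [extendedEval_apply, funext_iff, Fin.forall_fin_succ']
  simp [eq_comm, and_comm]

theorem le_hammingNorm_extendedEval [CommRing R] [IsDomain R] [DecidableEq R] {n m : ℕ}
    {e : Fin n → R} (he : Function.Injective e) {p : R[X]} (hp : p ≠ 0) (hpm : p.natDegree ≤ m) :
    n + 1 - m ≤ hammingNorm (extendedEval e m p) := by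
  have hzeros := card_filter_eval_eq_zero_le he hp
  have hnorm := hammingNorm_add_card_filter_eq_zero fun j => p.eval (e j)
  rw [Fintype.card_fin] at hnorm
  rw [extendedEval_apply, hammingNorm_snoc]
  split_ifs with hm
  · have : p.natDegree ≠ m := fun h => hp (leadingCoeff_eq_zero.mp (by rwa [leadingCoeff, h]))
    omega
  · omega

end Polynomial

section AdditiveRSCode

variable {R : Type*} [CommRing R] [DecidableEq R] {n k : ℕ}

noncomputable def additiveRSCode (e : Fin n → R) (S : Fin k → AddSubgroup R) : AddSubgroup (Fin (n + 1) → R) :=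
  (AddSubgroup.pi Set.univ S).map ((extendedEval e (k - 1)).comp (ofFn k)).toAddMonoidHom

theorem coe_additiveRSCode (e : Fin n → R) (S : Fin k → AddSubgroup R) (hk : 1 ≤ k) :
    (additiveRSCode e S : Set (Fin (n + 1) → R)) = {v | ∃ c : Fin k → R, (∀ i, c i ∈ S i) ∧
      (∀ j, v (Fin.castSucc j) = ∑ i, c i * e j ^ (i : ℕ)) ∧ v (Fin.last n) = c ⟨k - 1, by omega⟩} := by
  ext v
  simp only [additiveRSCode, Set.mem_ofPred_eq, SetLike.mem_coe, AddSubgroup.mem_map,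
    AddSubgroup.mem_pi, Set.mem_univ, true_implies, LinearMap.toAddMonoidHom_coe,
    LinearMap.comp_apply, extendedEval_eq_iff, eval_ofFn,
    ofFn_coeff_eq_val_of_lt _ (Nat.sub_one_lt_of_lt hk)]

variable [IsDomain R] {e : Fin n → R}

theorem le_hammingNorm_extendedEval_ofFn (he : Function.Injective e) {c : Fin k → R}
    (hc : c ≠ 0) : n + 1 - (k - 1) ≤ hammingNorm (extendedEval e (k - 1) (ofFn k c)) :=
  le_hammingNorm_extendedEval he ((injective_ofFn k).ne_iff' (map_zero _) |>.mpr hc)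
    (natDegree_ofFn_le c)

theorem le_hammingNorm_of_mem_additiveRSCode (he : Function.Injective e)
    (S : Fin k → AddSubgroup R) :
    ∀ v ∈ additiveRSCode e S, v ≠ 0 → n + 1 - (k - 1) ≤ hammingNorm v := by
  rintro v ⟨c, -, rfl⟩ hv0
  exact le_hammingNorm_extendedEval_ofFn he (by rintro rfl; exact hv0 (map_zero _))

theorem card_additiveRSCode (he : Function.Injective e) (S : Fin k → AddSubgroup R)
    (hk : k ≤ n + 1) : Nat.card (additiveRSCode e S) = ∏ i, Nat.card (S i) := by
  have hinj : Function.Injective ((extendedEval e (k - 1)).comp (ofFn k)) :=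
    (injective_iff_map_eq_zero _).mpr fun c hc => by
      by_contra hne
      have := le_hammingNorm_extendedEval_ofFn he hne
      rw [← LinearMap.comp_apply, hc, hammingNorm_zero] at this
      omega
  rw [additiveRSCode, AddSubgroup.card_map_of_injective hinj, AddSubgroup.card_pi_univ]

end AdditiveRSCode

/-- Additive Reed–Solomon-type codes: if `S_0, …, S_{k-1}` are additive subgroups of `F_{q^h}`,
and `C = {(f(a_1),…,f(a_{q^h}),c_{k-1}) : f(x) = ∑ c_i x^i, c_i ∈ S_i}`, then `C` is additive
of size `∏ |S_i|`, has minimum distance at least `n - (k-1)` with `n = q^h + 1`, and when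
`q^{(k-1)h} < ∏|S_i| = q^r < q^{kh}` it attains the fractional Singleton bound
`⌈r/h⌉ = n - d + 1`. -/
theorem additive_reed_solomon_fractional_MDS
    (q h k r : ℕ) (K : Type) [Field K] [Fintype K]
    [DecidableEq K]
    (hK : Fintype.card K = q ^ h)
    (hk1 : 1 ≤ k) (hk2 : k ≤ q ^ h)
    (S : Fin k → AddSubgroup K)
    (e : Fin (q ^ h) ≃ K)
    (C : Set (Fin (q ^ h + 1) → K))
    (hC : C = {v | ∃ c : Fin k → K, (∀ i, c i ∈ S i) ∧
      (∀ j : Fin (q ^ h), v (Fin.castSucc j) = ∑ i : Fin k, c i * (e j) ^ (i : ℕ)) ∧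
      v (Fin.last (q ^ h)) = c ⟨k - 1, by omega⟩})
    (hr : (∏ i, Nat.card (S i)) = q ^ r) :
    (∀ u ∈ C, ∀ v ∈ C, u + v ∈ C) ∧
    Nat.card C = ∏ i, Nat.card (S i) ∧
    (∀ v ∈ C, v ≠ 0 → (q ^ h + 1) - (k - 1) ≤ hammingNorm v) ∧
    (q ^ ((k - 1) * h) < q ^ r → q ^ r < q ^ (k * h) →
      ∀ d : ℕ, (∀ v ∈ C, v ≠ 0 → d ≤ hammingNorm v) →
        (∃ v ∈ C, v ≠ 0 ∧ hammingNorm v = d) →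
        (⌈(r : ℚ) / (h : ℚ)⌉ : ℤ) = (q ^ h + 1 : ℤ) - (d : ℤ) + 1) := by
  obtain rfl := hC.trans (coe_additiveRSCode e S hk1).symm
  have hcard := card_additiveRSCode e.injective S (by omega)
  have hdist := le_hammingNorm_of_mem_additiveRSCode e.injective S
  refine ⟨fun u hu v hv => add_mem hu hv, hcard, hdist, ?_⟩
  rintro hlt hgt d hmin ⟨v, hvC, hv, rfl⟩
  have hq : 1 < q := lt_of_pow_lt_pow_left₀ h (Nat.zero_le q)
    (by simpa [← hK] using Fintype.one_lt_card)
  have hsingleton : q ^ r ≤ q ^ ((q ^ h + 1 - (hammingNorm v - 1)) * h) :=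
    calc q ^ r = Nat.card (additiveRSCode e S) := by rw [hcard, hr]
      _ ≤ Fintype.card K ^ (Fintype.card (Fin (q ^ h + 1)) - (hammingNorm v - 1)) :=
        AddSubgroup.card_le_card_pow_of_le_hammingNorm hmin
      _ = _ := by rw [hK, Fintype.card_fin, ← pow_mul, mul_comm]
  rw [Nat.pow_lt_pow_iff_right hq] at hlt hgt
  rw [Nat.pow_le_pow_iff_right hq] at hsingleton
  have hk : k - 1 < q ^ h + 1 - (hammingNorm v - 1) :=
    Nat.lt_of_mul_lt_mul_right (hlt.trans_le hsingleton)
  have hdk : hammingNorm v + k = q ^ h + 2 := by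
    have := hdist v hvC hv
    omega
  rw [ceil_div_eq_of_lt_of_le hlt hgt.le]
  zify at hdk
  linarith
end

section
/- If there is a linear [n,k,d] MDS code over F_q with n ≥ k + 2, then k ≤ q - 1. -/
/-- If there is a linear `[n,k,d]` MDS code over `F_q` with `n ≥ k + 2`, then `k ≤ q - 1`. -/
theorem linear_MDS_k_le_q_sub_one
    (q n k d : ℕ) (Fq : Type) [Field Fq] [Fintype Fq] [DecidableEq Fq]
    (hq : Fintype.card Fq = q)
    (C : Submodule Fq (Fin n → Fq)) (hk : Module.finrank Fq C = k)
    (hd1 : ∀ u ∈ C, u ≠ 0 → d ≤ hammingNorm u)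
    (hd2 : ∃ u ∈ C, u ≠ 0 ∧ hammingNorm u = d)
    (hMDS : (d : ℤ) = (n : ℤ) - (k : ℤ) + 1)
    (hn : n ≥ k + 2) :
    (k : ℤ) ≤ (q : ℤ) - 1 := by
  classical
  have hq2 : 2 ≤ q := hq ▸ Fintype.one_lt_card
  -- key : a codeword vanishing on k coordinates is zero
  have key : ∀ c ∈ C, ∀ S : Finset (Fin n), k ≤ S.card → (∀ l ∈ S, c l = 0) → c = 0 := by
    intro c hc S hS hz
    by_contra hc0
    have h1 := hd1 c hc hc0
    have h2 : hammingNorm c ≤ (Finset.univ \ S).card := by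
      refine Finset.card_le_card ?_
      intro i hi
      simp only [Finset.mem_filter, Finset.mem_univ, true_and] at hi
      simp only [Finset.mem_sdiff, Finset.mem_univ, true_and]
      intro hiS
      exact hi (hz i hiS)
    rw [Finset.card_sdiff_of_subset (Finset.subset_univ S), Finset.card_univ, Fintype.card_fin] at h2
    omega
  -- the embedding of the first k+2 coordinates
  have hle : k + 2 ≤ n := hn
  set ι : Fin (k + 2) → Fin n := Fin.castLE hle with hι
  have hιinj : Function.Injective ι := Fin.castLE_injective hle
  set π : (Fin n → Fq) →ₗ[Fq] (Fin (k + 2) → Fq) := LinearMap.funLeft Fq Fq ι with hπ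
  set E : Submodule Fq (Fin n → Fq) := LinearMap.ker π with hE
  have hmemE : ∀ x, x ∈ E ↔ ∀ j, x (ι j) = 0 := by
    intro x
    simp [hE, hπ, LinearMap.mem_ker, funext_iff, LinearMap.funLeft_apply]
  have hrankE : Module.finrank Fq E = n - (k + 2) := by
    have hsurj : Function.Surjective π := LinearMap.funLeft_surjective_of_injective Fq Fq ι hιinj
    have h := LinearMap.finrank_range_add_finrank_ker π
    rw [LinearMap.range_eq_top.mpr hsurj, finrank_top, Module.finrank_fin_fun,
      Module.finrank_fin_fun] at h
    rw [← hE] at h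
    omega
  have hCE : C ⊓ E = ⊥ := by
    rw [Submodule.eq_bot_iff]
    rintro x ⟨hxC, hxE⟩
    refine key x hxC (Finset.univ.image ι) ?_ ?_
    · rw [Finset.card_image_of_injective _ hιinj, Finset.card_univ, Fintype.card_fin]; omega
    · intro l hl
      obtain ⟨j, _, rfl⟩ := Finset.mem_image.mp hl
      exact (hmemE x).mp hxE j
  have hrankU : Module.finrank Fq ↥(C ⊔ E) = n - 2 := by
    have h := Submodule.finrank_sup_add_finrank_inf_eq C E
    rw [hCE, finrank_bot, hk, hrankE] at h
    omega
  have hrankV : Module.finrank Fq ((Fin n → Fq) ⧸ (C ⊔ E)) = 2 := by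
    have h := Submodule.finrank_quotient_add_finrank (C ⊔ E)
    rw [Module.finrank_fin_fun, hrankU] at h
    omega
  letI : Fintype ((Fin n → Fq) ⧸ (C ⊔ E)) := Fintype.ofFinite _
  have hcardV : Fintype.card ((Fin n → Fq) ⧸ (C ⊔ E)) = q ^ 2 := by
    rw [Module.card_eq_pow_finrank (K := Fq), hq, hrankV]
  -- the images of the basis vectors in the quotient
  set w : Fin (k + 2) → Fin n → Fq := fun j => Pi.single (ι j) (1 : Fq) with hw
  have hwsame : ∀ j, w j (ι j) = 1 := by
    intro j
    simp [hw]
  have hwne : ∀ (j) (l), l ≠ ι j → w j l = 0 := by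
    intro j l h
    simp [hw, Pi.single_eq_of_ne h]
  set v : Fin (k + 2) → ((Fin n → Fq) ⧸ (C ⊔ E)) :=
    fun j => Submodule.Quotient.mk (w j) with hv
  have hind : ∀ i j : Fin (k + 2), i ≠ j → ∀ a b : Fq,
      a • v i + b • v j = 0 → a = 0 ∧ b = 0 := by
    intro i j hij a b hab
    have hmem : a • w i + b • w j ∈ C ⊔ E := by
      rw [← Submodule.Quotient.mk_eq_zero]
      rw [Submodule.Quotient.mk_add, Submodule.Quotient.mk_smul, Submodule.Quotient.mk_smul]
      exact hab
    obtain ⟨c, hc, e, he, hce⟩ := Submodule.mem_sup.mp hmem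
    have heval : ∀ l, c l + e l = a * w i l + b * w j l := by
      intro l
      simpa using congrFun hce l
    have hczero : c = 0 := by
      refine key c hc ((Finset.univ.image ι) \ {ι i, ι j}) ?_ ?_
      · have h1 : (Finset.univ.image ι).card = k + 2 := by
          rw [Finset.card_image_of_injective _ hιinj, Finset.card_univ, Fintype.card_fin]
        have h2 : ({ι i, ι j} : Finset (Fin n)).card ≤ 2 := by
          apply le_trans (Finset.card_insert_le _ _)
          simp
        have h3 := Finset.le_card_sdiff ({ι i, ι j} : Finset (Fin n)) (Finset.univ.image ι)
        omega
      · intro l hl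
        rw [Finset.mem_sdiff] at hl
        obtain ⟨hl1, hl2⟩ := hl
        obtain ⟨m, _, rfl⟩ := Finset.mem_image.mp hl1
        simp only [Finset.mem_insert, Finset.mem_singleton, not_or] at hl2
        have h := heval (ι m)
        rw [(hmemE e).mp he m, hwne i _ hl2.1, hwne j _ hl2.2] at h
        simpa using h
    rw [hczero, zero_add] at hce
    have he' : a • w i + b • w j ∈ E := hce ▸ he
    constructor
    · have h := (hmemE _).mp he' i
      rw [Pi.add_apply, Pi.smul_apply, Pi.smul_apply, hwsame i,
        hwne j _ (fun h' => hij (hιinj h'))] at h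
      simpa using h
    · have h := (hmemE _).mp he' j
      rw [Pi.add_apply, Pi.smul_apply, Pi.smul_apply, hwsame j,
        hwne i _ (fun h' => hij (Eq.symm (hιinj h')))] at h
      simpa using h
  -- each v j is nonzero
  have hvne : ∀ (j : Fin (k + 2)) (a : Fq), a ≠ 0 → a • v j ≠ 0 := by
    intro j a ha h0
    obtain ⟨i, hij⟩ : ∃ i : Fin (k + 2), i ≠ j := by
      rcases exists_ne j with ⟨i, hi⟩
      exact ⟨i, hi⟩
    have := hind j i hij.symm a 0 (by rw [zero_smul, add_zero]; exact h0)
    exact ha this.1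
  -- the injection
  set g : Fin (k + 2) × Fqˣ → {x : (Fin n → Fq) ⧸ (C ⊔ E) // x ≠ 0} :=
    fun p => ⟨(p.2 : Fq) • v p.1, hvne p.1 _ p.2.ne_zero⟩ with hg
  have hginj : Function.Injective g := by
    rintro ⟨i, a⟩ ⟨j, b⟩ hgab
    have heq : (a : Fq) • v i = (b : Fq) • v j := congrArg Subtype.val hgab
    by_cases hij : i = j
    · subst hij
      have : ((a : Fq) - b) • v i = 0 := by
        rw [sub_smul, heq, sub_self]
      obtain ⟨m, hm⟩ := exists_ne i
      have h := hind i m (fun h' => hm h'.symm) ((a : Fq) - b) 0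
        (by rw [zero_smul, add_zero]; exact this)
      have : (a : Fq) = b := sub_eq_zero.mp h.1
      exact Prod.ext rfl (Units.ext this)
    · exfalso
      have : (a : Fq) • v i + (-(b : Fq)) • v j = 0 := by
        rw [neg_smul, heq]; exact add_neg_cancel _
      exact a.ne_zero (hind i j hij _ _ this).1
  have hcard := Fintype.card_le_of_injective g hginj
  rw [Fintype.card_prod, Fintype.card_fin, Fintype.card_units, hq] at hcard
  have hcardsub : Fintype.card {x : (Fin n → Fq) ⧸ (C ⊔ E) // x ≠ 0} = q ^ 2 - 1 := by
    have := Fintype.card_subtype_compl (fun x : (Fin n → Fq) ⧸ (C ⊔ E) => x = 0)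
    rw [hcardV, Fintype.card_subtype_eq (0 : (Fin n → Fq) ⧸ (C ⊔ E))] at this
    exact this
  rw [hcardsub] at hcard
  -- arithmetic
  obtain ⟨m, rfl⟩ : ∃ m, q = m + 2 := ⟨q - 2, by omega⟩
  have hsq : (m + 2) ^ 2 = (m + 3) * (m + 1) + 1 := by ring
  have hcard' : (k + 2) * (m + 1) ≤ (m + 2) ^ 2 - 1 := by
    have : m + 2 - 1 = m + 1 := rfl
    rwa [this] at hcard
  have h1 : (k + 2) * (m + 1) ≤ (m + 3) * (m + 1) := by omega
  have h2 : k + 2 ≤ m + 3 := Nat.le_of_mul_le_mul_right h1 (by omega)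
  push_cast
  omega
end

section
/- Griesmer-type bound for additive codes: if there is an additive code over F_{q^h} of length n, F_q-dimension r, and minimum distance d, and writing r = (k-1)h + r_0 with k = ⌈r/h⌉ and 1 ≤ r_0 ≤ h, then for every integer m with 2 ≤ m ≤ k, n ≥ k + d - m + ⌈d(q^{(m-2)h+r_0} - 1)/(q^{(m-2)h+r_0}(q^h - 1))⌉. -/
private lemma card_submodule_aux (Fq : Type) [Field Fq] [Fintype Fq] {M : Type}
    [AddCommGroup M] [Module Fq M] [Finite M] (p : Submodule Fq M) :
    Nat.card p = (Fintype.card Fq) ^ (Module.finrank Fq p) := by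
  haveI := Fintype.ofFinite p
  rw [Nat.card_eq_fintype_card, Module.card_eq_pow_finrank (K := Fq)]

set_option synthInstance.maxHeartbeats 1000000
set_option maxHeartbeats 2000000

/-- Griesmer-type bound for additive codes: if there is an additive code over `F_{q^h}` of
length `n`, `F_q`-dimension `r = (k-1)h + r₀` with `k = ⌈r/h⌉` and `1 ≤ r₀ ≤ h`, and minimum
distance `d`, then for every `m` with `2 ≤ m ≤ k`,
`n ≥ k + d - m + ⌈d(q^{(m-2)h+r₀} - 1) / (q^{(m-2)h+r₀}(q^h - 1))⌉`. -/
theorem additive_griesmer_bound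
    (q h n r d k r0 : ℕ) (Fq K : Type) [Field Fq] [Fintype Fq] [Field K] [Fintype K]
    [DecidableEq K] [Algebra Fq K]
    (hq : Fintype.card Fq = q) (hK : Fintype.card K = q ^ h)
    (C : Submodule Fq (Fin n → K)) (hr : Module.finrank Fq C = r)
    (hd1 : ∀ u ∈ C, u ≠ 0 → d ≤ hammingNorm u)
    (hd2 : ∃ u ∈ C, u ≠ 0 ∧ hammingNorm u = d)
    (hk : (k : ℤ) = ⌈(r : ℚ) / (h : ℚ)⌉)
    (hrk : r = (k - 1) * h + r0) (hr01 : 1 ≤ r0) (hr02 : r0 ≤ h) :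
    ∀ m : ℕ, 2 ≤ m → m ≤ k →
      (n : ℤ) ≥ (k : ℤ) + (d : ℤ) - (m : ℤ) +
        ⌈((d : ℚ) * ((q : ℚ) ^ ((m - 2) * h + r0) - 1)) /
          ((q : ℚ) ^ ((m - 2) * h + r0) * ((q : ℚ) ^ h - 1))⌉ := by
  intro m hm2 hmk
  -- basic numerical facts
  have hq2 : 2 ≤ q := hq ▸ Fintype.one_lt_card
  have hqh2 : 2 ≤ q ^ h := hK ▸ Fintype.one_lt_card
  have hh1 : 1 ≤ h := by
    by_contra hcon
    have : h = 0 := by omega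
    simp [this] at hqh2
  haveI : Module.Finite Fq K := Module.Finite.of_finite
  haveI : Module.Finite Fq (Fin n → K) := Module.Finite.of_finite
  -- finrank of K over Fq is h
  have hfinK : Module.finrank Fq K = h := by
    have hcard := Module.card_eq_pow_finrank (K := Fq) (V := K)
    rw [hq, hK] at hcard
    exact (Nat.pow_right_injective hq2 hcard.symm)
  have hVfr : Module.finrank Fq (Fin n → K) = n * h := by
    rw [Module.finrank_pi_fintype]
    simp [hfinK, Finset.sum_const, Fintype.card_fin]
  -- k ≤ n
  have hrn : r ≤ n * h := by
    have h1 : Module.finrank Fq C ≤ Module.finrank Fq (Fin n → K) := Submodule.finrank_le C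
    omega
  have hkn : k ≤ n := by
    have : (k - 1) * h < n * h := by omega
    have := Nat.lt_of_mul_lt_mul_right this
    omega
  -- choose a set S of k - m coordinates
  set s : ℕ := k - m with hs
  obtain ⟨S, -, hScard⟩ := Finset.exists_subset_card_eq
    (s := (Finset.univ : Finset (Fin n))) (n := s) (by simp; omega)
  -- the subcode vanishing on S
  set πS : (Fin n → K) →ₗ[Fq] (S → K) :=
    LinearMap.pi fun j : S => LinearMap.proj (R := Fq) (j : Fin n) with hπS
  set D : Submodule Fq (Fin n → K) := C ⊓ LinearMap.ker πS with hD
  set e : ℕ := Module.finrank Fq D with he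
  -- dimension bound for D : r ≤ e + s * h
  have hkerπ : n * h ≤ Module.finrank Fq (LinearMap.ker πS) + s * h := by
    have h1 := LinearMap.finrank_range_add_finrank_ker πS
    rw [hVfr] at h1
    have h2 : Module.finrank Fq (LinearMap.range πS) ≤ s * h := by
      have h3 : Module.finrank Fq (LinearMap.range πS) ≤ Module.finrank Fq (S → K) :=
        Submodule.finrank_le _
      have h4 : Module.finrank Fq (S → K) = s * h := by
        rw [Module.finrank_pi_fintype]
        simp [hfinK, Finset.sum_const, Fintype.card_coe, hScard]
      omega
    omega
  have hsupinf := Submodule.finrank_sup_add_finrank_inf_eq C (LinearMap.ker πS)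
  have hsuple : Module.finrank Fq ↥(C ⊔ LinearMap.ker πS) ≤ n * h := by
    have := Submodule.finrank_le (C ⊔ LinearMap.ker πS)
    omega
  have hre : r ≤ e + s * h := by
    rw [he, hD]
    rw [hr] at hsupinf
    omega
  have heD : (m - 1) * h + r0 ≤ e := by
    have hk1 : k - 1 = (k - m) + (m - 1) := by omega
    rw [hk1, add_mul] at hrk
    rw [hrk, hs] at hre
    omega
  have hhe : h ≤ e := by
    have : 1 * h ≤ (m - 1) * h := Nat.mul_le_mul_right h (by omega)
    omega
  -- finiteness / cardinalities
  haveI : Finite (Fin n → K) := inferInstance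
  haveI : Finite D := Subtype.finite
  haveI := Fintype.ofFinite D
  have hDcard : Nat.card D = q ^ e := by rw [card_submodule_aux, hq, he]
  -- the weight sum
  set u : D → (Fin n → K) := fun c => (c : Fin n → K) with hu
  classical
  set W : ℕ := ∑ c : D, hammingNorm (u c) with hW
  -- lower bound for W
  have hlow : (q ^ e - 1) * d ≤ W := by
    have hcard0 : (Finset.univ.filter (fun c : D => c ≠ 0)).card = q ^ e - 1 := by
      rw [Finset.filter_ne']
      rw [Finset.card_erase_of_mem (Finset.mem_univ _), Finset.card_univ,
        ← Nat.card_eq_fintype_card, hDcard]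
    have hd' : ∀ c ∈ Finset.univ.filter (fun c : D => c ≠ 0), d ≤ hammingNorm (u c) := by
      intro c hc
      rw [Finset.mem_filter] at hc
      apply hd1 (u c) (Submodule.mem_inf.mp c.2).1
      intro hzero
      exact hc.2 (Subtype.ext hzero)
    calc (q ^ e - 1) * d
        = (Finset.univ.filter (fun c : D => c ≠ 0)).card • d := by rw [hcard0, smul_eq_mul]
      _ ≤ ∑ c ∈ Finset.univ.filter (fun c : D => c ≠ 0), hammingNorm (u c) :=
          Finset.card_nsmul_le_sum _ _ _ hd'
      _ ≤ W := Finset.sum_le_sum_of_subset (Finset.filter_subset _ _)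
  -- swap the sum
  have hWswap : W = ∑ i : Fin n, (Finset.univ.filter (fun c : D => u c i ≠ 0)).card := by
    rw [hW]
    simp only [hammingNorm, Finset.card_filter]
    rw [Finset.sum_comm]
  -- coordinates in S contribute 0
  have hSzero : ∀ i ∈ S, (Finset.univ.filter (fun c : D => u c i ≠ 0)).card = 0 := by
    intro i hi
    rw [Finset.card_eq_zero, Finset.filter_eq_empty_iff]
    intro c _
    simp only [ne_eq, not_not]
    have hc : πS (u c) = 0 := LinearMap.mem_ker.mp (Submodule.mem_inf.mp c.2).2
    exact congrFun hc ⟨i, hi⟩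
  -- each coordinate contributes at most q^e - q^(e-h)
  have hNi : ∀ i : Fin n,
      (Finset.univ.filter (fun c : D => u c i ≠ 0)).card ≤ q ^ e - q ^ (e - h) := by
    intro i
    set Di : Submodule Fq (Fin n → K) :=
      D ⊓ LinearMap.ker (LinearMap.proj (R := Fq) (φ := fun _ : Fin n => K) i) with hDi
    set f : ℕ := Module.finrank Fq Di with hf
    -- e ≤ f + h
    have hkerp : n * h ≤ Module.finrank Fq
        (LinearMap.ker (LinearMap.proj (R := Fq) (φ := fun _ : Fin n => K) i)) + h := by
      have h1 := LinearMap.finrank_range_add_finrank_ker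
        (LinearMap.proj (R := Fq) (φ := fun _ : Fin n => K) i)
      rw [hVfr] at h1
      have h2 : Module.finrank Fq (LinearMap.range
          (LinearMap.proj (R := Fq) (φ := fun _ : Fin n => K) i)) ≤ h := by
        have := Submodule.finrank_le (LinearMap.range
          (LinearMap.proj (R := Fq) (φ := fun _ : Fin n => K) i))
        rw [hfinK] at this
        omega
      omega
    have hsupinf2 := Submodule.finrank_sup_add_finrank_inf_eq D
      (LinearMap.ker (LinearMap.proj (R := Fq) (φ := fun _ : Fin n => K) i))
    have hsuple2 : Module.finrank Fq
        ↥(D ⊔ LinearMap.ker (LinearMap.proj (R := Fq) (φ := fun _ : Fin n => K) i))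
        ≤ n * h := by
      have := Submodule.finrank_le
        (D ⊔ LinearMap.ker (LinearMap.proj (R := Fq) (φ := fun _ : Fin n => K) i))
      omega
    have hef : e ≤ f + h := by
      rw [he, hf, hDi]
      omega
    -- cardinality of the zero fiber
    have hDicard : Nat.card Di = q ^ f := by rw [card_submodule_aux, hq, hf]
    have hZcard : (Finset.univ.filter (fun c : D => ¬ u c i ≠ 0)).card = q ^ f := by
      rw [← hDicard]
      have h1 : (Finset.univ.filter (fun c : D => ¬ u c i ≠ 0)).card
          = Nat.card {c : D // u c i = 0} := by
        simp only [not_not]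
        rw [Nat.card_eq_fintype_card, Fintype.card_subtype]
      rw [h1]
      apply Nat.card_congr
      refine ⟨fun c => ⟨c.1.1, Submodule.mem_inf.mpr ⟨c.1.2, ?_⟩⟩,
        fun x => ⟨⟨x.1, (Submodule.mem_inf.mp x.2).1⟩, ?_⟩, fun c => rfl, fun x => rfl⟩
      · rw [LinearMap.mem_ker]
        exact c.2
      · have h2 := (Submodule.mem_inf.mp x.2).2
        rw [LinearMap.mem_ker] at h2
        exact h2
    have hsplit := Finset.card_filter_add_card_filter_not
      (s := (Finset.univ : Finset D)) (p := fun c : D => u c i ≠ 0)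
    rw [Finset.card_univ, ← Nat.card_eq_fintype_card, hDcard] at hsplit
    simp only [not_not] at hsplit hZcard
    rw [hZcard] at hsplit
    have hZge : q ^ (e - h) ≤ q ^ f := Nat.pow_le_pow_right (by omega) (by omega)
    omega
  -- upper bound for W
  have hupp : W ≤ (n - s) * (q ^ e - q ^ (e - h)) := by
    rw [hWswap]
    have hsub : ∑ i : Fin n, (Finset.univ.filter (fun c : D => u c i ≠ 0)).card
        = ∑ i ∈ Sᶜ, (Finset.univ.filter (fun c : D => u c i ≠ 0)).card := by
      symm
      apply Finset.sum_subset (Finset.subset_univ _)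
      intro i _ hi
      exact hSzero i (by simpa using hi)
    rw [hsub]
    calc ∑ i ∈ Sᶜ, (Finset.univ.filter (fun c : D => u c i ≠ 0)).card
        ≤ Sᶜ.card • (q ^ e - q ^ (e - h)) :=
          Finset.sum_le_card_nsmul _ _ _ (fun i _ => hNi i)
      _ = (n - s) * (q ^ e - q ^ (e - h)) := by
          rw [Finset.card_compl, hScard, Fintype.card_fin, smul_eq_mul]
  -- the key counting inequality, over ℕ
  have hkey : (q ^ e - 1) * d ≤ (n - s) * (q ^ e - q ^ (e - h)) := le_trans hlow hupp
  -- move to ℚ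
  have hsn : s ≤ n := le_trans (by omega) hkn
  have hpow1 : (1 : ℕ) ≤ q ^ e := Nat.one_le_pow _ _ (by omega)
  have hpowle : q ^ (e - h) ≤ q ^ e := Nat.pow_le_pow_right (by omega) (by omega)
  have hkeyQ : ((q : ℚ) ^ e - 1) * d ≤ ((n : ℚ) - s) * ((q : ℚ) ^ e - (q : ℚ) ^ (e - h)) := by
    have h1 : ((q ^ e - 1) * d : ℕ) = (((q:ℚ) ^ e - 1) * d : ℚ) := by
      push_cast [Nat.cast_sub hpow1]; ring
    have h2 : (((n - s) * (q ^ e - q ^ (e - h)) : ℕ) : ℚ)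
        = ((n : ℚ) - s) * ((q : ℚ) ^ e - (q : ℚ) ^ (e - h)) := by
      push_cast [Nat.cast_sub hsn, Nat.cast_sub hpowle]; ring
    calc ((q : ℚ) ^ e - 1) * d = (((q ^ e - 1) * d : ℕ) : ℚ) := by rw [h1]
      _ ≤ (((n - s) * (q ^ e - q ^ (e - h)) : ℕ) : ℚ) := by exact_mod_cast hkey
      _ = ((n : ℚ) - s) * ((q : ℚ) ^ e - (q : ℚ) ^ (e - h)) := h2
  -- abbreviations for the rational computation
  set a : ℕ := (m - 2) * h + r0 with ha
  have hae : a + h ≤ e := by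
    have hm1 : m - 1 = (m - 2) + 1 := by omega
    rw [hm1, add_mul, one_mul] at heD
    omega
  set E : ℚ := (q : ℚ) ^ (e - h) with hE
  set Qa : ℚ := (q : ℚ) ^ a with hQa
  set cc : ℚ := (q : ℚ) ^ h - 1 with hcc
  have hqQ : (2 : ℚ) ≤ (q : ℚ) := by exact_mod_cast hq2
  have hQapos : 0 < Qa := by positivity
  have hEpos : 0 < E := by positivity
  have hccpos : 0 < cc := by
    rw [hcc]
    have : (2 : ℚ) ≤ (q : ℚ) ^ h := by exact_mod_cast hqh2
    linarith
  have hQaE : Qa ≤ E := by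
    rw [hQa, hE]
    apply pow_le_pow_right₀ (by linarith)
    omega
  have hqe : (q : ℚ) ^ e = E * ((q:ℚ) ^ h) := by
    rw [hE, ← pow_add]
    congr 1
    omega
  -- derive (n : ℚ) - s ≥ d + d (E - 1) / (E cc)
  have hmain : (d : ℚ) + (d : ℚ) * (E - 1) / (E * cc) ≤ (n : ℚ) - s := by
    have hden : (0 : ℚ) < E * cc := by positivity
    have hexp : (q : ℚ) ^ e - E = E * cc := by rw [hqe, hcc]; ring
    have hEq2 : (d : ℚ) + (d : ℚ) * (E - 1) / (E * cc) = ((q : ℚ) ^ e - 1) * d / (E * cc) := by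
      rw [hqe]
      field_simp
      ring
    rw [hEq2, div_le_iff₀ hden, ← hexp]
    exact hkeyQ
  -- monotonicity in the power
  have hmono : (d : ℚ) * (Qa - 1) / (Qa * cc) ≤ (d : ℚ) * (E - 1) / (E * cc) := by
    rw [div_le_div_iff₀ (by positivity) (by positivity)]
    have hd0 : (0 : ℚ) ≤ (d : ℚ) := by positivity
    nlinarith [mul_nonneg hd0 hccpos.le, hQaE, hQapos, hEpos]
  -- ceiling step
  have hceil : ⌈(d : ℚ) * (Qa - 1) / (Qa * cc)⌉ ≤ (n : ℤ) - (s : ℤ) - (d : ℤ) := by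
    rw [Int.ceil_le]
    push_cast
    linarith [hmono, hmain]
  have hsz : (s : ℤ) = (k : ℤ) - (m : ℤ) := by
    rw [hs]; push_cast [Nat.cast_sub hmk]; ring
  rw [ge_iff_le]
  rw [hsz] at hceil
  linarith [hceil]
end

section
/- Integral Griesmer-type bound: if there is an additive code over F_{q^h} of length n, F_q-dimension r = kh (k ∈ ℕ), and minimum distance d, and m is such that q^{(m-2)h} < d ≤ q^{(m-1)h} ≤ q^r, then n ≥ k + d - m + ⌈Σ_{j=1}^{m-1} d/q^{jh}⌉. -/
/-! Only the additive structure of the code matters. Passing to the subcode of codewords that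
vanish at a coordinate where the code is not identically zero costs at most a factor `|K| = q^h`
in size and one coordinate of the support; after `k - (m - 1)` such steps the code still has at
least `|K|^(m-1)` words, and for it Plotkin's averaging argument (the total weight is at least
`(|C| - 1) d`, while each coordinate is nonzero in at most a fraction `1 - 1/|K|` of the codewords)
gives `∑_{j < m-1} d/|K|^j ≤ support size`. Since `d ≤ |K|^(m-1)`, the top term of this sum is at
most `1`, so the sum is at least `d - 1 + ∑_{j=1}^{m-1} d/q^{jh}`. -/

open Finset

theorem geom_sum_div_pow_mul_le {R : Type*} [Field R] [LinearOrder R] [IsStrictOrderedRing R]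
    {b x : R} (d : R) (M : ℕ) (hb : 1 < b) (hd : 0 ≤ d) (hx : b ^ M ≤ x) :
    (∑ j ∈ range M, d / b ^ j) * (x * (b - 1)) ≤ (x - 1) * d * b := by
  have hbM : 0 < b ^ M := by positivity
  have hgeom : (∑ j ∈ range M, d / b ^ j) * (b - 1) = d * b * (1 - (b ^ M)⁻¹) := by
    have h := geom_sum_mul b⁻¹ M
    simp only [div_eq_mul_inv, ← mul_sum, inv_pow] at h ⊢
    have hb0 : b ≠ 0 := by positivity
    field_simp at h ⊢
    linear_combination (-d) * h
  have hxb : 1 ≤ x * (b ^ M)⁻¹ := by rwa [le_mul_inv_iff₀ hbM, one_mul]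
  calc (∑ j ∈ range M, d / b ^ j) * (x * (b - 1))
      = x * (d * b * (1 - (b ^ M)⁻¹)) := by rw [← hgeom]; ring
    _ ≤ (x - 1) * d * b := by nlinarith [mul_nonneg hd (by linarith : (0 : R) ≤ b)]

theorem sum_hammingNorm_eq_sum_card_ne_zero {ι A : Type*} [Fintype ι] [Zero A] [DecidableEq A]
    (S : Finset (ι → A)) : ∑ c ∈ S, hammingNorm c = ∑ i, #{c ∈ S | c i ≠ 0} := by
  simp only [hammingNorm, card_filter]
  exact sum_comm

namespace AdditiveCode

section Shortening

variable {ι A : Type*} [AddCommGroup A]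

def vanishingAt (C : AddSubgroup (ι → A)) (i : ι) : AddSubgroup (ι → A) :=
  C ⊓ (Pi.evalAddMonoidHom (fun _ : ι => A) i).ker

theorem mem_vanishingAt {C : AddSubgroup (ι → A)} {i : ι} {c : ι → A} :
    c ∈ vanishingAt C i ↔ c ∈ C ∧ c i = 0 := by
  simp [vanishingAt]

theorem vanishingAt_le (C : AddSubgroup (ι → A)) (i : ι) : vanishingAt C i ≤ C := inf_le_left

theorem card_le_card_vanishingAt_mul [Fintype A] (C : AddSubgroup (ι → A)) (i : ι) :
    Nat.card C ≤ Nat.card (vanishingAt C i) * Fintype.card A := by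
  have hcard := AddSubgroup.relIndex_mul_relIndex ⊥ _ C bot_le (vanishingAt_le C i)
  rw [AddSubgroup.relIndex_bot_left, AddSubgroup.relIndex_bot_left, vanishingAt,
    AddSubgroup.inf_relIndex_left, AddSubgroup.relIndex_ker] at hcard
  rw [← hcard, ← Nat.card_eq_fintype_card]
  exact Nat.mul_le_mul_left _ (Nat.card_le_card_of_injective _ Subtype.coe_injective)

end Shortening

open Classical

variable {ι A : Type*} [Fintype ι] [AddCommGroup A]

noncomputable def support (C : AddSubgroup (ι → A)) : Finset ι := {i | ∃ c ∈ C, c i ≠ 0}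

theorem mem_support {C : AddSubgroup (ι → A)} {i : ι} : i ∈ support C ↔ ∃ c ∈ C, c i ≠ 0 := by
  simp [support]

theorem support_vanishingAt_subset (C : AddSubgroup (ι → A)) (i : ι) :
    support (vanishingAt C i) ⊆ (support C).erase i := by
  intro j hj
  obtain ⟨c, hc, hcj⟩ := mem_support.1 hj
  rw [mem_vanishingAt] at hc
  exact mem_erase.2 ⟨fun hji => hcj (hji ▸ hc.2), mem_support.2 ⟨c, hc.1, hcj⟩⟩

variable [Fintype A]

noncomputable def codewords (C : AddSubgroup (ι → A)) : Finset (ι → A) := {c | c ∈ C}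

theorem mem_codewords {C : AddSubgroup (ι → A)} {c : ι → A} : c ∈ codewords C ↔ c ∈ C := by
  simp [codewords]

theorem card_codewords (C : AddSubgroup (ι → A)) : #(codewords C) = Nat.card C := by
  rw [Nat.card_eq_fintype_card, Fintype.card_subtype, codewords]

variable [DecidableEq A]

theorem card_ne_zero_mul_add_card_le (C : AddSubgroup (ι → A)) (i : ι) :
    #{c ∈ codewords C | c i ≠ 0} * Fintype.card A + Nat.card C ≤ Nat.card C * Fintype.card A := by
  have hzero : Nat.card (vanishingAt C i) = #{c ∈ codewords C | ¬c i ≠ 0} := by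
    rw [← card_codewords]
    congr 1
    ext c
    simp [mem_codewords, mem_vanishingAt]
  have hsplit := card_filter_add_card_filter_not (s := codewords C) (fun c => c i ≠ 0)
  rw [← hzero, card_codewords] at hsplit
  have := card_le_card_vanishingAt_mul C i
  nlinarith

theorem card_sub_one_mul_le_sum_hammingNorm (C : AddSubgroup (ι → A)) {d : ℕ}
    (hd : ∀ c ∈ C, c ≠ 0 → d ≤ hammingNorm c) :
    (Nat.card C - 1) * d ≤ ∑ c ∈ codewords C, hammingNorm c := by
  have hcard : #((codewords C).erase 0) = Nat.card C - 1 := by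
    rw [card_erase_of_mem (mem_codewords.2 C.zero_mem), card_codewords]
  calc (Nat.card C - 1) * d = #((codewords C).erase 0) • d := by rw [hcard, smul_eq_mul]
    _ ≤ ∑ c ∈ (codewords C).erase 0, hammingNorm c :=
        card_nsmul_le_sum _ _ _ fun c hc => by
          obtain ⟨hc0, hcC⟩ := mem_erase.1 hc
          exact hd c (mem_codewords.1 hcC) hc0
    _ ≤ ∑ c ∈ codewords C, hammingNorm c := sum_le_sum_of_subset (erase_subset _ _)

theorem plotkin_bound (C : AddSubgroup (ι → A)) {d : ℕ}
    (hd : ∀ c ∈ C, c ≠ 0 → d ≤ hammingNorm c) :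
    (Nat.card C - 1) * d * Fintype.card A + #(support C) * Nat.card C
      ≤ #(support C) * Nat.card C * Fintype.card A := by
  have hcols : ∑ c ∈ codewords C, hammingNorm c
      = ∑ i ∈ support C, #{c ∈ codewords C | c i ≠ 0} := by
    rw [sum_hammingNorm_eq_sum_card_ne_zero]
    refine (sum_subset (subset_univ _) fun i _ hi => ?_).symm
    rw [card_eq_zero, filter_eq_empty_iff]
    intro c hc hci
    exact hi (mem_support.2 ⟨c, mem_codewords.1 hc, hci⟩)
  have hcol := sum_le_sum fun i (_ : i ∈ support C) => card_ne_zero_mul_add_card_le C i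
  rw [sum_add_distrib, ← sum_mul, ← hcols, sum_const, sum_const, smul_eq_mul, smul_eq_mul,
    ← mul_assoc] at hcol
  have := Nat.mul_le_mul_right (Fintype.card A) (card_sub_one_mul_le_sum_hammingNorm C hd)
  linarith

variable [Nontrivial A]

theorem sum_div_pow_le_card_support (C : AddSubgroup (ι → A)) {d M : ℕ}
    (hC : Fintype.card A ^ M ≤ Nat.card C) (hd : ∀ c ∈ C, c ≠ 0 → d ≤ hammingNorm c) :
    ∑ j ∈ range M, (d : ℚ) / (Fintype.card A : ℚ) ^ j ≤ #(support C) := by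
  have hB : (1 : ℚ) < Fintype.card A := by exact_mod_cast Fintype.one_lt_card
  have hN : (1 : ℚ) ≤ Nat.card C := by exact_mod_cast Nat.card_pos
  have hplotkin := plotkin_bound C hd
  rw [← Nat.cast_le (α := ℚ)] at hplotkin
  push_cast [Nat.cast_sub (Nat.one_le_cast.1 hN)] at hplotkin
  have hgeom := geom_sum_div_pow_mul_le (d : ℚ) M hB d.cast_nonneg (x := (Nat.card C : ℚ))
    (by exact_mod_cast hC)
  refine le_of_mul_le_mul_right ?_ (mul_pos (by linarith) (by linarith) :
    (0 : ℚ) < Nat.card C * (Fintype.card A - 1))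
  linarith

theorem griesmer_bound (d M t : ℕ) (C : AddSubgroup (ι → A))
    (hC : Fintype.card A ^ (M + t) ≤ Nat.card C) (hd : ∀ c ∈ C, c ≠ 0 → d ≤ hammingNorm c) :
    (t : ℚ) + ∑ j ∈ range M, (d : ℚ) / (Fintype.card A : ℚ) ^ j ≤ #(support C) := by
  induction t generalizing C with
  | zero => simpa using sum_div_pow_le_card_support C hC hd
  | succ t ih =>
    have hB : 1 < Fintype.card A := Fintype.one_lt_card
    obtain ⟨c, hc, hc0⟩ := C.bot_or_exists_ne_zero.resolve_left fun hbot => by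
      rw [hbot, AddSubgroup.card_bot] at hC
      exact (Nat.one_lt_pow (by omega) hB).not_ge hC
    obtain ⟨i, hi⟩ := Function.ne_iff.1 hc0
    have hi_mem : i ∈ support C := mem_support.2 ⟨c, hc, hi⟩
    have hcard : Fintype.card A ^ (M + t) ≤ Nat.card (vanishingAt C i) := by
      refine Nat.le_of_mul_le_mul_right ?_ (by omega : 0 < Fintype.card A)
      rw [← pow_succ]
      exact hC.trans (card_le_card_vanishingAt_mul C i)
    have hshort := ih (vanishingAt C i) hcard fun c hc => hd c (vanishingAt_le C i hc)
    have hsupp : #(support (vanishingAt C i)) + 1 ≤ #(support C) := by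
      rw [← card_erase_add_one hi_mem]
      exact Nat.add_le_add_right (card_le_card (support_vanishingAt_subset C i)) 1
    push_cast
    have : ((#(support (vanishingAt C i)) : ℕ) : ℚ) + 1 ≤ #(support C) := by exact_mod_cast hsupp
    linarith

end AdditiveCode

open AdditiveCode in
theorem additive_griesmer_bound_integral_general
    (q h n r d k m : ℕ) (Fq K : Type) [Field Fq] [Fintype Fq] [Field K] [Fintype K]
    [DecidableEq K] [Algebra Fq K]
    (hq : Fintype.card Fq = q) (hK : Fintype.card K = q ^ h)
    (C : Submodule Fq (Fin n → K)) (hr : Module.finrank Fq C = r) (hrk : r = k * h)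
    (hd1 : ∀ u ∈ C, u ≠ 0 → d ≤ hammingNorm u)
    (hm2 : 2 ≤ m)
    (hm' : d ≤ q ^ ((m - 1) * h))
    (hm'' : q ^ ((m - 1) * h) ≤ q ^ r) :
    (n : ℤ) ≥ (k : ℤ) + (d : ℤ) - (m : ℤ) +
      ⌈∑ j ∈ Finset.Icc 1 (m - 1), (d : ℚ) / (q : ℚ) ^ (j * h)⌉ := by
  have hpow (j : ℕ) : q ^ (j * h) = Fintype.card K ^ j := by rw [hK, ← pow_mul, mul_comm]
  have hcard : Nat.card C.toAddSubgroup = Fintype.card K ^ k := by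
    rw [← hpow, ← hrk, ← hr, ← hq, ← Nat.card_eq_fintype_card]
    exact Module.natCard_eq_pow_finrank (V := C)
  have hMk : m - 1 ≤ k := by
    rw [hrk, hpow, hpow] at hm''
    exact (Nat.pow_le_pow_iff_right Fintype.one_lt_card).1 hm''
  have hgriesmer := griesmer_bound d (m - 1) (k - (m - 1)) C.toAddSubgroup
    (by rw [Nat.add_sub_cancel' hMk, hcard]) hd1
  have hlen : #(support C.toAddSubgroup) ≤ n := (card_le_univ _).trans_eq (Fintype.card_fin n)
  have hsplit : ∑ j ∈ range (m - 1), (d : ℚ) / (Fintype.card K : ℚ) ^ j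
      + d / (Fintype.card K : ℚ) ^ (m - 1)
      = d + ∑ j ∈ Icc 1 (m - 1), (d : ℚ) / (q : ℚ) ^ (j * h) := by
    rw [← sum_range_succ, range_eq_Ico, sum_eq_sum_Ico_succ_bot (by omega),
      Ico_add_one_right_eq_Icc, pow_zero, div_one]
    congr 1
    refine sum_congr rfl fun j _ => ?_
    rw [← Nat.cast_pow, ← hpow, Nat.cast_pow]
  have hlast : (d : ℚ) / (Fintype.card K : ℚ) ^ (m - 1) ≤ 1 := by
    rw [hpow] at hm'
    exact div_le_one_of_le₀ (by exact_mod_cast hm') (by positivity)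
  have hceil : ∑ j ∈ Icc 1 (m - 1), (d : ℚ) / (q : ℚ) ^ (j * h)
      ≤ ((n - k - d + m : ℤ) : ℚ) := by
    rw [Nat.cast_sub hMk, Nat.cast_sub (by omega : 1 ≤ m)] at hgriesmer
    have : ((#(support C.toAddSubgroup) : ℕ) : ℚ) ≤ n := by exact_mod_cast hlen
    push_cast
    linarith
  have := Int.ceil_le.2 hceil
  omega

/-- Integral Griesmer-type bound: if there is an additive code over `F_{q^h}` of length `n`,
`F_q`-dimension `r = kh`, and minimum distance `d`, and `m ≥ 2` satisfies
`q^{(m-2)h} < d ≤ q^{(m-1)h} ≤ q^r`, then `n ≥ k + d - m + ⌈∑_{j=1}^{m-1} d/q^{jh}⌉`. -/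
theorem additive_griesmer_bound_integral
    (q h n r d k m : ℕ) (Fq K : Type) [Field Fq] [Fintype Fq] [Field K] [Fintype K]
    [DecidableEq K] [Algebra Fq K]
    (hq : Fintype.card Fq = q) (hK : Fintype.card K = q ^ h)
    (C : Submodule Fq (Fin n → K)) (hr : Module.finrank Fq C = r) (hrk : r = k * h)
    (hd1 : ∀ u ∈ C, u ≠ 0 → d ≤ hammingNorm u)
    (hd2 : ∃ u ∈ C, u ≠ 0 ∧ hammingNorm u = d)
    (hm2 : 2 ≤ m)
    (hm : q ^ ((m - 2) * h) < d) (hm' : d ≤ q ^ ((m - 1) * h))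
    (hm'' : q ^ ((m - 1) * h) ≤ q ^ r) :
    (n : ℤ) ≥ (k : ℤ) + (d : ℤ) - (m : ℤ) +
      ⌈∑ j ∈ Finset.Icc 1 (m - 1), (d : ℚ) / (q : ℚ) ^ (j * h)⌉ :=
  additive_griesmer_bound_integral_general q h n r d k m Fq K hq hK C hr hrk hd1 hm2 hm' hm''
end

section
/- Second Griesmer-type bound for additive codes: if there is an additive code over F_{q^h} of length n, F_q-dimension r ≥ h, and minimum distance d, then n ≥ d + ((q-1)/(q^h - 1)) · Σ_{j=1}^{r-h} ⌈d/q^j⌉. -/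
open Finset

lemma ceilDiv_le_iff' {a b c : ℕ} (hb : 0 < b) : a ⌈/⌉ b ≤ c ↔ a ≤ b * c := by
  rw [ceilDiv_le_iff_le_smul hb, smul_eq_mul]

lemma ceilDiv_ceilDiv (w a b : ℕ) (ha : 0 < a) (hb : 0 < b) :
    (w ⌈/⌉ a) ⌈/⌉ b = w ⌈/⌉ (a * b) := by
  apply eq_of_forall_ge_iff
  intro c
  rw [ceilDiv_le_iff' hb, ceilDiv_le_iff' ha, ceilDiv_le_iff' (Nat.mul_pos ha hb), mul_assoc]

lemma ceilDiv_mul_cancel (d c b : ℕ) (hc : 0 < c) :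
    (d * c) ⌈/⌉ (c * b) = d ⌈/⌉ b := by
  rcases Nat.eq_zero_or_pos b with rfl | hb
  · simp
  apply eq_of_forall_ge_iff
  intro k
  rw [ceilDiv_le_iff' (Nat.mul_pos hc hb), ceilDiv_le_iff' hb]
  constructor
  · intro hle
    have : d * c ≤ (b * k) * c := by linarith [hle, mul_assoc c b k]
    exact Nat.le_of_mul_le_mul_right this hc
  · intro hle
    calc d * c ≤ (b * k) * c := Nat.mul_le_mul_right c hle
    _ = c * b * k := by ring

lemma ceilDiv_mono_left {d w : ℕ} (hdw : d ≤ w) (m : ℕ) : d ⌈/⌉ m ≤ w ⌈/⌉ m := by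
  rcases Nat.eq_zero_or_pos m with rfl | hm
  · simp
  exact (gc_smul_ceilDiv (β := ℕ) hm).monotone_l hdw

lemma ceilDiv_eq_ceil (d m : ℕ) (hm : 0 < m) :
    (⌈(d : ℚ) / (m : ℚ)⌉ : ℤ) = (d ⌈/⌉ m : ℕ) := by
  have hm' : (0:ℚ) < m := by exact_mod_cast hm
  apply le_antisymm
  · rw [Int.ceil_le, div_le_iff₀ hm']
    have h := le_smul_ceilDiv (b := d) hm
    rw [smul_eq_mul] at h
    calc (d:ℚ) ≤ ((m * (d ⌈/⌉ m) : ℕ) : ℚ) := by exact_mod_cast h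
    _ = ((d ⌈/⌉ m : ℕ) : ℚ) * m := by push_cast; ring
  · have h0 : (0:ℤ) ≤ ⌈(d : ℚ) / (m : ℚ)⌉ := by
      positivity
    set k := ⌈(d : ℚ) / (m : ℚ)⌉ with hk
    have h1 : (d : ℚ) / m ≤ k := Int.le_ceil _
    rw [div_le_iff₀ hm'] at h1
    have h1' : (d:ℤ) ≤ k * m := by exact_mod_cast h1
    have h1'' : (d:ℤ) ≤ (k.toNat : ℤ) * (m:ℤ) := by rwa [Int.toNat_of_nonneg h0]
    have h2 : d ≤ m * k.toNat := by
      rw [mul_comm]; exact_mod_cast h1'' 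
    have := (ceilDiv_le_iff' (a := d) (c := k.toNat) hm).mpr h2
    omega

set_option synthInstance.maxHeartbeats 200000 in
lemma griesmer_aux {F : Type} [Field F] [Fintype F] [DecidableEq F] (k : ℕ) :
    ∀ (ι : Type) (_ : Fintype ι) (_ : DecidableEq ι) (C : Submodule F (ι → F)) (d : ℕ),
      Module.finrank F C = k → (∀ v ∈ C, v ≠ 0 → d ≤ hammingNorm v) →
      ∑ j ∈ Finset.range k, d ⌈/⌉ (Fintype.card F) ^ j ≤ Fintype.card ι := by
  induction k with
  | zero => intro ι _ _ C d _ _; simp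
  | succ k IH =>
    intro ι _inst1 _inst2 C d hrk hd
    classical
    set Q := Fintype.card F with hQdef
    have hQ1 : 0 < Q := Fintype.card_pos
    haveI : Nontrivial C := Module.nontrivial_of_finrank_pos (R := F) (by omega)
    obtain ⟨u0, hu0ne⟩ := exists_ne (0 : C)
    haveI : Fintype C := Fintype.ofFinite C
    obtain ⟨u, humem, hmin0⟩ := Finset.exists_min_image
      (Finset.univ.filter fun v : C => v ≠ 0) (fun v => hammingNorm (v : ι → F))
      ⟨u0, by simp [hu0ne]⟩
    have hune : (u : ι → F) ≠ 0 := by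
      intro h
      have : u ≠ 0 := by simpa using humem
      exact this (Subtype.ext h)
    set w := hammingNorm (u : ι → F) with hwdef
    have hw1 : 0 < w := Nat.pos_of_ne_zero fun h => hune (hammingNorm_eq_zero.mp h)
    have hdw : d ≤ w := hd u u.2 hune
    have hminw : ∀ v ∈ C, v ≠ (0 : ι → F) → w ≤ hammingNorm v := by
      intro v hv hvne
      have hm : (⟨v, hv⟩ : C) ∈ Finset.univ.filter (fun v : C => v ≠ 0) :=
        Finset.mem_filter.mpr ⟨Finset.mem_univ _, fun h => hvne (congrArg Subtype.val h)⟩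
      exact hmin0 ⟨v, hv⟩ hm
    set s : Finset ι := Finset.univ.filter (fun i => (u : ι → F) i ≠ 0) with hsdef
    have hscard : s.card = w := rfl
    set π : (ι → F) →ₗ[F] ({x // x ∈ sᶜ} → F) :=
      LinearMap.funLeft F F (Subtype.val : {x // x ∈ sᶜ} → ι) with hπdef
    have hπapp : ∀ (x : ι → F) (j : {x // x ∈ sᶜ}), π x j = x j.val := fun _ _ => rfl
    have hπu : π (u : ι → F) = 0 := by
      funext j
      have hj : (j : ι) ∉ s := Finset.mem_compl.mp j.2
      have h2 : ¬ ((u : ι → F) (j : ι) ≠ 0) := fun hne =>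
        hj (Finset.mem_filter.mpr ⟨Finset.mem_univ _, hne⟩)
      simpa [hπapp] using not_not.mp h2
    -- norm splits over s and sᶜ
    have norm_split : ∀ x : ι → F,
        hammingNorm x = (s.filter fun i => x i ≠ 0).card + hammingNorm (π x) := by
      intro x
      have h1 : hammingNorm (π x) = (sᶜ.filter fun i => x i ≠ 0).card := by
        rw [hammingNorm]
        refine Finset.card_bij (fun (j : {x // x ∈ sᶜ}) _ => (j : ι)) ?_ ?_ ?_
        · intro j hj
          have hj' : x (j : ι) ≠ 0 := by
            simpa [hπapp] using (Finset.mem_filter.mp hj).2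
          exact Finset.mem_filter.mpr ⟨j.2, hj'⟩
        · intro a ha b hb hab; exact Subtype.ext hab
        · intro i hi
          simp only [Finset.mem_filter] at hi
          exact ⟨⟨i, hi.1⟩, by simp [hπapp, hi.2], rfl⟩
      rw [hammingNorm, h1, ← Finset.card_union_of_disjoint, ← Finset.filter_union,
        Finset.union_compl]
      exact Finset.disjoint_filter_filter (disjoint_compl_right)
    -- pigeonhole
    have pigeon : ∀ v : ι → F,
        ∃ α : F, w ≤ Q * (s.filter (fun i => v i = α * (u : ι → F) i)).card := by
      intro v
      set f : ι → F := fun i => v i * ((u : ι → F) i)⁻¹ with hfdef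
      have hsum : s.card = ∑ α ∈ (Finset.univ : Finset F), (s.filter fun i => f i = α).card :=
        Finset.card_eq_sum_card_fiberwise (fun x _ => Finset.mem_univ (f x))
      obtain ⟨α, -, hαmax⟩ := Finset.exists_max_image (Finset.univ : Finset F)
        (fun α => (s.filter fun i => f i = α).card) Finset.univ_nonempty
      refine ⟨α, ?_⟩
      have hle : s.card ≤ Q * (s.filter fun i => f i = α).card := by
        rw [hsum]
        calc ∑ β ∈ (Finset.univ : Finset F), (s.filter fun i => f i = β).card
            ≤ (Finset.univ : Finset F).card • (s.filter fun i => f i = α).card :=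
              Finset.sum_le_card_nsmul _ _ _ (fun β _ => hαmax β (Finset.mem_univ β))
          _ = Q * (s.filter fun i => f i = α).card := by rw [smul_eq_mul, Finset.card_univ]
      have hfilter_eq : (s.filter fun i => f i = α) = (s.filter fun i => v i = α * (u:ι→F) i) := by
        apply Finset.filter_congr
        intro i hi
        rw [hsdef] at hi
        simp only [Finset.mem_filter, Finset.mem_univ, true_and] at hi
        rw [hfdef]
        exact mul_inv_eq_iff_eq_mul₀ hi
      rw [hfilter_eq] at hle
      calc w = s.card := hscard.symm
        _ ≤ _ := hle
    -- main claims
    have main : ∀ v ∈ C, (π v = 0 → v ∈ Submodule.span F {(u : ι → F)}) ∧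
        (π v ≠ 0 → w ≤ Q * hammingNorm (π v)) := by
      intro v hv
      obtain ⟨α, hα⟩ := pigeon v
      set fib := s.filter (fun i => v i = α * (u : ι → F) i) with hfibdef
      have hfibsub : fib ⊆ s := Finset.filter_subset _ _
      have hfible : fib.card ≤ w := hscard ▸ Finset.card_le_card hfibsub
      set y := v - α • (u : ι → F) with hydef
      have hyC : y ∈ C := C.sub_mem hv (C.smul_mem _ u.2)
      have hπy : π y = π v := by rw [hydef, map_sub, map_smul, hπu, smul_zero, sub_zero]
      have hys : (s.filter fun i => y i ≠ 0) ⊆ s \ fib := by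
        intro i hi
        simp only [Finset.mem_filter] at hi
        rw [Finset.mem_sdiff, hfibdef]
        refine ⟨hi.1, ?_⟩
        simp only [Finset.mem_filter, not_and]
        intro _
        intro hvi
        apply hi.2
        rw [hydef]
        simp [hvi]
      have hycard : (s.filter fun i => y i ≠ 0).card ≤ w - fib.card := by
        calc (s.filter fun i => y i ≠ 0).card ≤ (s \ fib).card := Finset.card_le_card hys
          _ = w - fib.card := by rw [Finset.card_sdiff_of_subset hfibsub, hscard]
      have hwy : hammingNorm y ≤ w - fib.card + hammingNorm (π v) := by
        rw [norm_split y, hπy]; omega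
      constructor
      · intro hπv
        by_cases hy0 : y = 0
        · have hveq : v = α • (u : ι → F) := by
            rw [hydef, sub_eq_zero] at hy0; exact hy0
          rw [hveq]
          exact Submodule.smul_mem _ _ (Submodule.mem_span_singleton_self _)
        · have h1 := hminw y hyC hy0
          rw [hπv, hammingNorm_zero] at hwy
          have hfibpos : 0 < fib.card := by
            rcases Nat.eq_zero_or_pos fib.card with h | h
            · rw [h, mul_zero] at hα; omega
            · exact h
          omega
      · intro hπv
        have hy0 : y ≠ 0 := fun h => hπv (by rw [← hπy, h, map_zero])
        have h1 := hminw y hyC hy0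
        have h2 : fib.card ≤ hammingNorm (π v) := by omega
        calc w ≤ Q * fib.card := hα
          _ ≤ Q * hammingNorm (π v) := Nat.mul_le_mul_left _ h2
    -- the punctured code
    set C' := C.map π with hC'def
    have hd' : ∀ v' ∈ C', v' ≠ 0 → w ⌈/⌉ Q ≤ hammingNorm v' := by
      rintro v' hv' hv'0
      obtain ⟨v, hv, rfl⟩ := Submodule.mem_map.mp hv'
      exact (ceilDiv_le_iff' hQ1).mpr ((main v hv).2 hv'0)
    have hker : LinearMap.ker (π ∘ₗ C.subtype) =
        (Submodule.span F {(u : ι → F)}).comap C.subtype := by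
      ext v
      simp only [LinearMap.mem_ker, LinearMap.comp_apply, Submodule.mem_comap,
        Submodule.subtype_apply]
      constructor
      · intro h0; exact (main v v.2).1 h0
      · intro hsp
        obtain ⟨c, hc⟩ := Submodule.mem_span_singleton.mp hsp
        rw [← hc, map_smul, hπu, smul_zero]
    have hrange : LinearMap.range (π ∘ₗ C.subtype) = C' := by
      rw [LinearMap.range_comp, Submodule.range_subtype]
    have hrk' : Module.finrank F C' = k := by
      have hrn := LinearMap.finrank_range_add_finrank_ker (π ∘ₗ C.subtype)
      rw [hrange, hker, hrk] at hrn
      have hspan_le : Submodule.span F {(u : ι → F)} ≤ C := by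
        rw [Submodule.span_singleton_le_iff_mem]; exact u.2
      have hone : Module.finrank F
          ((Submodule.span F {(u : ι → F)}).comap C.subtype) = 1 := by
        rw [LinearEquiv.finrank_eq (Submodule.comapSubtypeEquivOfLe hspan_le)]
        exact finrank_span_singleton hune
      rw [hone] at hrn
      omega
    have hIH := IH {x // x ∈ sᶜ} inferInstance inferInstance C' (w ⌈/⌉ Q) hrk' hd'
    have hcard' : Fintype.card {x // x ∈ sᶜ} = Fintype.card ι - w := by
      rw [Fintype.card_coe, Finset.card_compl, hscard]
    have hwle : w ≤ Fintype.card ι := hscard ▸ Finset.card_le_univ s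
    rw [hcard'] at hIH
    have hIH2 : ∑ j ∈ Finset.range k, w ⌈/⌉ Q ^ (j + 1) ≤ Fintype.card ι - w := by
      refine le_trans (le_of_eq (Finset.sum_congr rfl fun j _ => ?_)) hIH
      rw [ceilDiv_ceilDiv w Q (Q ^ j) hQ1 (pow_pos hQ1 j), ← pow_succ']
    calc ∑ j ∈ Finset.range (k + 1), d ⌈/⌉ Q ^ j
        ≤ ∑ j ∈ Finset.range (k + 1), w ⌈/⌉ Q ^ j :=
          Finset.sum_le_sum fun j _ => ceilDiv_mono_left hdw _
      _ = (∑ j ∈ Finset.range k, w ⌈/⌉ Q ^ (j + 1)) + w ⌈/⌉ Q ^ 0 :=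
          Finset.sum_range_succ' _ _
      _ ≤ (Fintype.card ι - w) + w := by
          have : w ⌈/⌉ Q ^ 0 = w := by simp
          omega
      _ = Fintype.card ι := by omega

open Projectivization in
-- counting lemma: lines in a submodule
lemma proj_count {F V : Type} [Field F] [Fintype F] [AddCommGroup V] [Module F V]
    [Finite V] (W : Submodule F V) :
    Nat.card {p : Projectivization F V // p.rep ∈ W} * (Fintype.card F - 1) = Nat.card W - 1 := by
  classical
  have key : Nat.card ({f : V // f ∈ W ∧ f ≠ 0}) =
      Nat.card ({p : Projectivization F V // p.rep ∈ W} × Fˣ) := by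
    apply Nat.card_congr
    symm
    apply Equiv.ofBijective (f := fun pc : {p : Projectivization F V // p.rep ∈ W} × Fˣ =>
      (⟨(pc.2 : F) • pc.1.1.rep,
        W.smul_mem _ pc.1.2,
        smul_ne_zero (Units.ne_zero pc.2) pc.1.1.rep_nonzero⟩ : {f : V // f ∈ W ∧ f ≠ 0}))
    constructor
    · rintro ⟨⟨p, hp⟩, c⟩ ⟨⟨p', hp'⟩, c'⟩ heq
      simp only [Subtype.mk.injEq] at heq
      have hpp' : p = p' := by
        have h1 : Projectivization.mk F ((c : F) • p.rep)
            (smul_ne_zero (Units.ne_zero c) p.rep_nonzero) = p := by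
          conv_rhs => rw [← Projectivization.mk_rep p]
          exact (Projectivization.mk_eq_mk_iff F _ _ _ p.rep_nonzero).mpr ⟨c, rfl⟩
        have h2 : Projectivization.mk F ((c' : F) • p'.rep)
            (smul_ne_zero (Units.ne_zero c') p'.rep_nonzero) = p' := by
          conv_rhs => rw [← Projectivization.mk_rep p']
          exact (Projectivization.mk_eq_mk_iff F _ _ _ p'.rep_nonzero).mpr ⟨c', rfl⟩
        rw [← h1, ← h2]
        congr 1
      subst hpp'
      have hc : (c : F) = (c' : F) := by
        have := heq
        have hinj := smul_left_injective F (M := V) p.rep_nonzero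
        exact hinj heq
      simp [Subtype.ext_iff, Units.ext_iff, hc]
    · rintro ⟨f, hfW, hf0⟩
      set p := Projectivization.mk F f hf0 with hpdef
      have : Projectivization.mk F p.rep p.rep_nonzero = Projectivization.mk F f hf0 := by
        rw [Projectivization.mk_rep]
      obtain ⟨a, ha⟩ := (Projectivization.mk_eq_mk_iff F _ _ _ hf0).mp this
      -- ha : a • f = p.rep
      have hrepW : p.rep ∈ W := by rw [← ha]; exact W.smul_mem _ hfW
      refine ⟨⟨⟨p, hrepW⟩, a⁻¹⟩, ?_⟩
      simp only [Subtype.mk.injEq]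
      rw [← ha]
      simp [Units.smul_def, smul_smul]
  have e2 : {f : V // f ∈ W ∧ f ≠ 0} ≃ {g : ↥W // g ≠ (0 : ↥W)} :=
    { toFun := fun f => ⟨⟨f.1, f.2.1⟩, fun h => f.2.2 (by simpa [Subtype.ext_iff] using h)⟩
      invFun := fun g => ⟨g.1.1, g.1.2, fun h => g.2 (Subtype.ext h)⟩
      left_inv := fun f => rfl
      right_inv := fun g => rfl }
  haveI : Fintype V := Fintype.ofFinite V
  haveI : Fintype (↥W) := Fintype.ofFinite _
  have h3 : Nat.card {g : ↥W // g ≠ (0 : ↥W)} = Nat.card (↥W) - 1 := by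
    rw [Nat.card_eq_fintype_card, Nat.card_eq_fintype_card]
    classical
    rw [Fintype.card_subtype_compl (p := fun g : ↥W => g = 0),
      Fintype.card_subtype_eq (0 : ↥W)]
  have h4 : Nat.card Fˣ = Fintype.card F - 1 := by
    classical
    rw [Nat.card_eq_fintype_card, Fintype.card_units]
  calc Nat.card {p : Projectivization F V // p.rep ∈ W} * (Fintype.card F - 1)
      = Nat.card {p : Projectivization F V // p.rep ∈ W} * Nat.card Fˣ := by rw [h4]
    _ = Nat.card ({p : Projectivization F V // p.rep ∈ W} × Fˣ) := (Nat.card_prod _ _).symm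
    _ = Nat.card {f : V // f ∈ W ∧ f ≠ 0} := key.symm
    _ = Nat.card {g : ↥W // g ≠ (0 : ↥W)} := Nat.card_congr e2
    _ = Nat.card (↥W) - 1 := h3

lemma proj_card_top {F V : Type} [Field F] [Fintype F] [AddCommGroup V] [Module F V]
    [Finite V] :
    Nat.card (Projectivization F V) * (Fintype.card F - 1) = Nat.card V - 1 := by
  have h := proj_count (F := F) (V := V) ⊤
  rwa [Nat.card_congr (Equiv.subtypeUnivEquiv (fun p => Submodule.mem_top)),
    Nat.card_congr (Submodule.topEquiv (R := F) (M := V)).toEquiv] at h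

set_option maxHeartbeats 1000000 in
set_option synthInstance.maxHeartbeats 400000 in
lemma count_rep_ne {F V : Type} [Field F] [Fintype F] [AddCommGroup V] [Module F V]
    [Finite V] (φ : V →ₗ[F] F) (hφ : φ ≠ 0) :
    Nat.card {p : Projectivization F V // φ p.rep ≠ 0} =
      Fintype.card F ^ (Module.finrank F V - 1) := by
  classical
  haveI : Fintype V := Fintype.ofFinite V
  haveI : Finite (Projectivization F V) := Quotient.finite _
  haveI : Fintype (Projectivization F V) := Fintype.ofFinite _
  set q := Fintype.card F with hqdef
  have hq2 : 2 ≤ q := Fintype.one_lt_card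
  set m := Module.finrank F V with hmdef
  have hrange : LinearMap.range φ = ⊤ := by
    rcases eq_bot_or_eq_top (LinearMap.range φ) with hb | ht
    · exact absurd (LinearMap.range_eq_bot.mp hb) hφ
    · exact ht
  have hrn := LinearMap.finrank_range_add_finrank_ker φ
  rw [hrange, finrank_top, Module.finrank_self] at hrn
  have hm1 : 1 ≤ m := by omega
  have hker : Module.finrank F (LinearMap.ker φ) = m - 1 := by omega
  have hcardker : Nat.card (LinearMap.ker φ) = q ^ (m - 1) := by
    haveI : Fintype (LinearMap.ker φ) := Fintype.ofFinite _
    rw [Nat.card_eq_fintype_card, Module.card_eq_pow_finrank (K := F), hker]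
  have hcardV : Nat.card V = q ^ m := by
    rw [Nat.card_eq_fintype_card, Module.card_eq_pow_finrank (K := F)]
  have hzero := proj_count (F := F) (V := V) (LinearMap.ker φ)
  have hzero' : Nat.card {p : Projectivization F V // φ p.rep = 0} * (q - 1) =
      q ^ (m - 1) - 1 := by
    rw [← hcardker, ← hzero]
    have he : Nat.card {p : Projectivization F V // φ p.rep = 0} =
        Nat.card {p : Projectivization F V // p.rep ∈ LinearMap.ker φ} :=
      Nat.card_congr (Equiv.subtypeEquivRight (fun p => by simp [LinearMap.mem_ker]))
    rw [he]
  have htop := proj_card_top (F := F) (V := V)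
  rw [hcardV] at htop
  have hsplit : Nat.card {p : Projectivization F V // φ p.rep ≠ 0} +
      Nat.card {p : Projectivization F V // φ p.rep = 0} =
      Nat.card (Projectivization F V) := by
    rw [Nat.card_eq_fintype_card, Nat.card_eq_fintype_card, Nat.card_eq_fintype_card]
    rw [Fintype.card_subtype_compl (p := fun p : Projectivization F V => φ p.rep = 0)]
    have hle : Fintype.card {p : Projectivization F V // φ p.rep = 0} ≤
        Fintype.card (Projectivization F V) := Fintype.card_subtype_le _
    omega
  set A := Nat.card {p : Projectivization F V // φ p.rep ≠ 0} with hA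
  set B := Nat.card {p : Projectivization F V // φ p.rep = 0} with hB
  have hArith : (A : ℤ) * ((q:ℤ) - 1) = (q:ℤ) ^ (m-1) * ((q:ℤ) - 1) := by
    have e1 : ((A : ℤ) + (B : ℤ)) * ((q:ℤ) - 1) = (q:ℤ) ^ m - 1 := by
      have h0 : (A + B) * (q - 1) = q ^ m - 1 := by rw [hsplit]; exact htop
      have h1 : (1:ℕ) ≤ q ^ m := Nat.one_le_pow _ _ (by omega)
      have h1' : (1:ℕ) ≤ q := by omega
      have := congrArg (Nat.cast : ℕ → ℤ) h0
      push_cast [Nat.cast_sub h1, Nat.cast_sub h1'] at this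
      linarith [this]
    have e2 : (B : ℤ) * ((q:ℤ) - 1) = (q:ℤ) ^ (m-1) - 1 := by
      have h1 : (1:ℕ) ≤ q ^ (m-1) := Nat.one_le_pow _ _ (by omega)
      have h1' : (1:ℕ) ≤ q := by omega
      have := congrArg (Nat.cast : ℕ → ℤ) hzero'
      push_cast [Nat.cast_sub h1, Nat.cast_sub h1'] at this
      linarith [this]
    have e3 : (q:ℤ) ^ m = (q:ℤ) ^ (m-1) * q := by
      rw [← pow_succ]
      congr 1
      omega
    nlinarith [e1, e2, e3]
  have hfinal : (A : ℤ) = (q:ℤ) ^ (m-1) := by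
    have hne : ((q:ℤ) - 1) ≠ 0 := by
      have : (2:ℤ) ≤ (q:ℤ) := by exact_mod_cast hq2
      omega
    exact mul_right_cancel₀ hne hArith
  exact_mod_cast hfinal

/-- Second Griesmer-type bound for additive codes: if there is an additive code over `F_{q^h}`
of length `n`, `F_q`-dimension `r ≥ h`, and minimum distance `d`, then
`n ≥ d + ((q-1)/(q^h - 1)) ∑_{j=1}^{r-h} ⌈d/q^j⌉`. -/
theorem additive_griesmer_bound_second
    (q h n r d : ℕ) (Fq K : Type) [Field Fq] [Fintype Fq] [Field K] [Fintype K]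
    [DecidableEq K] [Algebra Fq K]
    (hq : Fintype.card Fq = q) (hK : Fintype.card K = q ^ h)
    (C : Submodule Fq (Fin n → K)) (hr : Module.finrank Fq C = r) (hrh : h ≤ r)
    (hd1 : ∀ u ∈ C, u ≠ 0 → d ≤ hammingNorm u)
    (hd2 : ∃ u ∈ C, u ≠ 0 ∧ hammingNorm u = d) :
    (n : ℚ) ≥ (d : ℚ) + (((q : ℚ) - 1) / ((q : ℚ) ^ h - 1)) *
      ∑ j ∈ Finset.Icc 1 (r - h), (⌈(d : ℚ) / (q : ℚ) ^ j⌉ : ℚ) := by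
  classical
  -- basic numerics
  have hq2 : 2 ≤ q := by rw [← hq]; exact Fintype.one_lt_card
  obtain ⟨u₀, hu₀C, hu₀ne, hu₀d⟩ := hd2
  have hd1le : 1 ≤ d := by
    rw [← hu₀d]
    exact Nat.one_le_iff_ne_zero.mpr (fun h0 => hu₀ne (hammingNorm_eq_zero.mp h0))
  have hh1 : 1 ≤ h := by
    rcases Nat.eq_zero_or_pos h with rfl | hpos
    · have : Fintype.card K = 1 := by rw [hK, pow_zero]
      have := Fintype.one_lt_card (α := K)
      omega
    · exact hpos
  have hfinK : Module.finrank Fq K = h := by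
    have h1 : Fintype.card K = q ^ Module.finrank Fq K := by
      rw [← hq]; exact Module.card_eq_pow_finrank (K := Fq)
    rw [hK] at h1
    exact (Nat.pow_right_injective hq2 h1.symm)
  -- the dual space
  set V := Module.Dual Fq K with hVdef
  haveI : Finite V := Finite.of_injective _ (DFunLike.coe_injective (F := V))
  have hfinV : Module.finrank Fq V = h := by
    rw [← hfinK]
    exact Module.finrank_linearMap_self Fq Fq K
  set P := Projectivization Fq V with hPdef
  haveI : Finite P := Quotient.finite _
  haveI : Fintype P := Fintype.ofFinite _
  set cP := Fintype.card P with hcPdef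
  haveI : Fintype V := Fintype.ofFinite V
  have hcardV : Fintype.card V = q ^ h := by
    rw [Module.card_eq_pow_finrank (K := Fq) (V := V), hq, hfinV]
  have hcProj : cP * (q - 1) = q ^ h - 1 := by
    have h1 := proj_card_top (F := Fq) (V := V)
    rw [Nat.card_eq_fintype_card, Nat.card_eq_fintype_card, hcardV, hq] at h1
    exact h1
  -- per-symbol counting
  have hcount : ∀ x : K, x ≠ 0 → Nat.card {p : P // p.rep x ≠ 0} = q ^ (h - 1) := by
    intro x hx
    have hφ : (Module.Dual.eval Fq K) x ≠ 0 := by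
      intro h0
      apply hx
      rw [← Module.forall_dual_apply_eq_zero_iff Fq x]
      intro φ
      have := congrArg (fun g => g φ) h0
      simpa using this
    have h1 := count_rep_ne (F := Fq) (V := V) ((Module.Dual.eval Fq K) x) hφ
    rw [hfinV, hq] at h1
    rw [← h1]
    apply Nat.card_congr
    exact Equiv.subtypeEquivRight (fun p => Iff.rfl)
  -- the concatenation map
  set Φ : (Fin n → K) →ₗ[Fq] ((Fin n × P) → Fq) :=
    { toFun := fun v ip => ip.2.rep (v ip.1)
      map_add' := by intro v w; funext ip; simp
      map_smul' := by intro c v; funext ip; simp } with hΦdef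
  have hΦapp : ∀ (v : Fin n → K) (ip : Fin n × P), Φ v ip = ip.2.rep (v ip.1) :=
    fun _ _ => rfl
  -- weight of concatenated words
  have hweight : ∀ v : Fin n → K, hammingNorm (Φ v) = hammingNorm v * q ^ (h - 1) := by
    intro v
    have h1 : hammingNorm (Φ v) = Fintype.card {ip : Fin n × P // ip.2.rep (v ip.1) ≠ 0} := by
      rw [hammingNorm, Fintype.card_subtype]
      rfl
    have h2 : Fintype.card {ip : Fin n × P // ip.2.rep (v ip.1) ≠ 0} =
        ∑ i : Fin n, Fintype.card {p : P // p.rep (v i) ≠ 0} := by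
      rw [Fintype.card_congr (Equiv.subtypeProdEquivSigmaSubtype
        (fun (i : Fin n) (p : P) => p.rep (v i) ≠ 0))]
      rw [Fintype.card_sigma]
    have h3 : ∀ i : Fin n, Fintype.card {p : P // p.rep (v i) ≠ 0} =
        if v i ≠ 0 then q ^ (h - 1) else 0 := by
      intro i
      by_cases hvi : v i = 0
      · haveI : IsEmpty {p : P // p.rep (v i) ≠ 0} :=
          ⟨fun p => p.2 (by simp [hvi])⟩
        rw [if_neg (by simp [hvi]), Fintype.card_eq_zero]
      · rw [if_pos hvi, ← Nat.card_eq_fintype_card]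
        exact hcount (v i) hvi
    rw [h1, h2]
    rw [Finset.sum_congr rfl (fun i _ => h3 i), Finset.sum_ite, Finset.sum_const_zero,
      add_zero, Finset.sum_const, smul_eq_mul, hammingNorm]
  -- injectivity of the concatenation map
  have hqh1pos : 0 < q ^ (h - 1) := pow_pos (by omega) _
  have hΦinj : Function.Injective Φ := by
    rw [← LinearMap.ker_eq_bot, LinearMap.ker_eq_bot']
    intro v hv
    have hwv := hweight v
    rw [hv, hammingNorm_zero] at hwv
    rcases Nat.mul_eq_zero.mp hwv.symm with h0 | h0
    · exact hammingNorm_eq_zero.mp h0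
    · omega
  set D := C.map Φ with hDdef
  have hrD : Module.finrank Fq D = r := by
    rw [← hr]
    exact (LinearEquiv.finrank_eq (Submodule.equivMapOfInjective Φ hΦinj C)).symm
  have hdD : ∀ w' ∈ D, w' ≠ 0 → d * q ^ (h - 1) ≤ hammingNorm w' := by
    rintro w' hw' hw'0
    obtain ⟨v, hv, rfl⟩ := Submodule.mem_map.mp hw'
    have hvne : v ≠ 0 := fun h0 => hw'0 (by rw [h0, map_zero])
    rw [hweight v]
    exact Nat.mul_le_mul_right _ (hd1 v hv hvne)
  have hG := griesmer_aux (F := Fq) r (Fin n × P) inferInstance inferInstance D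
    (d * q ^ (h - 1)) hrD hdD
  rw [hq, Fintype.card_prod, Fintype.card_fin] at hG
  -- split the Griesmer sum
  set m := r - h with hm
  have hsplit : ∑ j ∈ Finset.range r, (d * q ^ (h - 1)) ⌈/⌉ q ^ j =
      (∑ j ∈ Finset.range h, (d * q ^ (h - 1)) ⌈/⌉ q ^ j) +
      ∑ j ∈ Finset.Ico h r, (d * q ^ (h - 1)) ⌈/⌉ q ^ j := by
    rw [Finset.range_eq_Ico, ← Finset.sum_Ico_consecutive _ (Nat.zero_le h) hrh,
      ← Finset.range_eq_Ico]
  have hfirst : ∀ j ∈ Finset.range h, (d * q ^ (h - 1)) ⌈/⌉ q ^ j = d * q ^ (h - 1 - j) := by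
    intro j hj
    rw [Finset.mem_range] at hj
    have hpow : q ^ (h - 1) = q ^ (h - 1 - j) * q ^ j := by
      rw [← pow_add]; congr 1; omega
    have hqj : 0 < q ^ j := pow_pos (by omega) j
    calc (d * q ^ (h - 1)) ⌈/⌉ q ^ j = (d * q ^ (h - 1 - j) * q ^ j) ⌈/⌉ (q ^ j * 1) := by
          rw [hpow, mul_one, mul_assoc]
      _ = (d * q ^ (h - 1 - j)) ⌈/⌉ 1 := ceilDiv_mul_cancel _ _ _ hqj
      _ = d * q ^ (h - 1 - j) := by simp
  have hfirstsum : ∑ j ∈ Finset.range h, d * q ^ (h - 1 - j) =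
      d * ∑ t ∈ Finset.range h, q ^ t := by
    rw [Finset.mul_sum]
    exact Finset.sum_range_reflect (fun t => d * q ^ t) h
  have hsecond : ∀ j ∈ Finset.Ico h r, (d * q ^ (h - 1)) ⌈/⌉ q ^ j = d ⌈/⌉ q ^ (j - h + 1) := by
    intro j hj
    rw [Finset.mem_Ico] at hj
    have hpow : q ^ j = q ^ (h - 1) * q ^ (j - h + 1) := by
      rw [← pow_add]; congr 1; omega
    rw [hpow]
    exact ceilDiv_mul_cancel d _ _ hqh1pos
  have hsecondsum : ∑ j ∈ Finset.Ico h r, d ⌈/⌉ q ^ (j - h + 1) =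
      ∑ t ∈ Finset.range m, d ⌈/⌉ q ^ (t + 1) := by
    rw [Finset.sum_Ico_eq_sum_range]
    apply Finset.sum_congr rfl
    intro t _
    have he : h + t - h + 1 = t + 1 := by omega
    rw [he]
  rw [hsplit, Finset.sum_congr rfl hfirst, Finset.sum_congr rfl hsecond,
    hfirstsum, hsecondsum] at hG
  set GN := ∑ t ∈ Finset.range h, q ^ t with hGN
  set SN := ∑ t ∈ Finset.range m, d ⌈/⌉ q ^ (t + 1) with hSN
  -- ceiling identification
  have hceil : ∀ j : ℕ, 0 < j → (⌈(d : ℚ) / (q : ℚ) ^ j⌉ : ℚ) = ((d ⌈/⌉ q ^ j : ℕ) : ℚ) := by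
    intro j _
    have hpos : 0 < q ^ j := pow_pos (by omega) _
    have h2 := ceilDiv_eq_ceil d (q ^ j) hpos
    have h3 : (⌈(d : ℚ) / ((q ^ j : ℕ) : ℚ)⌉ : ℤ) = ((d ⌈/⌉ q ^ j : ℕ) : ℤ) := h2
    push_cast at h3
    exact_mod_cast h3
  have hT : (∑ j ∈ Finset.Icc 1 m, (⌈(d : ℚ) / (q : ℚ) ^ j⌉ : ℚ)) = ((SN : ℕ) : ℚ) := by
    rw [hSN, ← Finset.Ico_add_one_right_eq_Icc, Finset.sum_Ico_eq_sum_range, Nat.cast_sum]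
    simp only [Nat.add_sub_cancel]
    apply Finset.sum_congr rfl
    intro t _
    rw [show 1 + t = t + 1 from by omega, hceil (t + 1) (by omega)]
  -- rational arithmetic
  have hq1Q : (0 : ℚ) < (q : ℚ) - 1 := by
    have : (2 : ℚ) ≤ (q : ℚ) := by exact_mod_cast hq2
    linarith
  have hBpos : (0 : ℚ) < (q : ℚ) ^ h - 1 := by
    have h2 : (2 : ℕ) ≤ q ^ h := by
      calc 2 ≤ q := hq2
        _ = q ^ 1 := (pow_one q).symm
        _ ≤ q ^ h := Nat.pow_le_pow_right (by omega) hh1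
    have : (2 : ℚ) ≤ (q : ℚ) ^ h := by exact_mod_cast h2
    linarith
  have hGq : ((GN : ℕ) : ℚ) * ((q : ℚ) - 1) = (q : ℚ) ^ h - 1 := by
    have h0 := geom_sum_mul (x := (q : ℚ)) h
    have hcast : ((GN : ℕ) : ℚ) = ∑ t ∈ Finset.range h, (q : ℚ) ^ t := by
      rw [hGN]; push_cast; rfl
    rw [hcast]
    exact h0
  have hcPq : (cP : ℚ) * ((q : ℚ) - 1) = (q : ℚ) ^ h - 1 := by
    have h1 : ((cP * (q - 1) : ℕ) : ℚ) = ((q ^ h - 1 : ℕ) : ℚ) := by rw [hcProj]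
    have hq1 : 1 ≤ q := by omega
    have hqh1 : 1 ≤ q ^ h := Nat.one_le_pow _ _ (by omega)
    push_cast [Nat.cast_sub hq1, Nat.cast_sub hqh1] at h1
    exact_mod_cast h1
  have hmainQ : (d : ℚ) * GN + SN ≤ (n : ℚ) * cP := by exact_mod_cast hG
  rw [ge_iff_le, hT]
  have key : ((q : ℚ) - 1) * (SN : ℚ) ≤ ((n : ℚ) - d) * ((q : ℚ) ^ h - 1) := by
    have h5 : ((d : ℚ) * GN + SN) * ((q : ℚ) - 1) ≤ (n : ℚ) * cP * ((q : ℚ) - 1) :=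
      mul_le_mul_of_nonneg_right hmainQ (le_of_lt hq1Q)
    calc ((q : ℚ) - 1) * SN
        = ((d : ℚ) * GN + SN) * ((q : ℚ) - 1) - (d : ℚ) * ((GN : ℚ) * ((q : ℚ) - 1)) := by
          ring
      _ ≤ (n : ℚ) * cP * ((q : ℚ) - 1) - (d : ℚ) * ((GN : ℚ) * ((q : ℚ) - 1)) := by
          linarith [h5]
      _ = (n : ℚ) * ((cP : ℚ) * ((q : ℚ) - 1)) - (d : ℚ) * ((GN : ℚ) * ((q : ℚ) - 1)) := by
          ring
      _ = (n : ℚ) * ((q : ℚ) ^ h - 1) - (d : ℚ) * ((q : ℚ) ^ h - 1) := by rw [hcPq, hGq]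
      _ = ((n : ℚ) - d) * ((q : ℚ) ^ h - 1) := by ring
  have h6 : ((q : ℚ) - 1) / ((q : ℚ) ^ h - 1) * (SN : ℚ) ≤ (n : ℚ) - d := by
    rw [div_mul_eq_mul_div, div_le_iff₀ hBpos]
    exact key
  linarith [h6]
end

section
/- If G ∈ F_{q^h}^{r×n} generates (as F_q-row span) an additive code of minimum distance d, write G = Σ_{i=1}^h G_i e_i over an F_q-basis {e_1,...,e_h} of F_{q^h}, and for each point c = (c_1,...,c_h) of PG(h-1,q) set Ĝ_c = Σ c_i G_i. Then for every u ∈ F_q^r, if uG has Hamming weight w, the concatenated vector (uĜ_c)_{c ∈ PG(h-1,q)} has Hamming weight w·q^{h-1}. -/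
/-!
Let `v_j ∈ F_q^h` be the coordinates of `(uG)_j` in the basis `e`. Then `(uĜ_c)_j = ⟨c, v_j⟩`,
so the weight of the concatenated vector is `∑_j #{c ∈ PG(h-1,q) : ⟨c, v_j⟩ ≠ 0}`. The `j`-th
term vanishes when `v_j = 0`, i.e. when `(uG)_j = 0`. Otherwise the `q^h - q^{h-1}` vectors off
the hyperplane `v_jᗮ` fall into projective points of `q - 1` vectors each, so `q^{h-1}` points
are not orthogonal to `v_j`.
-/

open Module Matrix Finset
open scoped LinearAlgebra.Projectivization

namespace Module.Dual

variable {k V : Type*} [Field k] [Finite k] [AddCommGroup V] [Module k V] [Module.Finite k V]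

theorem natCard_apply_ne_zero {f : Dual k V} (hf : f ≠ 0) :
    Nat.card {v // f v ≠ 0} = Nat.card k ^ (finrank k V - 1) * (Nat.card k - 1) := by
  have : Fintype V := @Fintype.ofFinite V (Module.finite_of_finite k)
  classical
  have hker : Nat.card {v // f v = 0} = Nat.card k ^ (finrank k V - 1) := by
    rw [← finrank_ker_add_one_of_ne_zero hf, Nat.add_sub_cancel, ← natCard_eq_pow_finrank]
    rfl
  have hn : 0 < finrank k V := by rw [← finrank_ker_add_one_of_ne_zero hf]; omega
  rw [Nat.card_eq_fintype_card, Fintype.card_subtype_compl, ← Nat.card_eq_fintype_card,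
    ← Nat.card_eq_fintype_card, hker, natCard_eq_pow_finrank (K := k), Nat.mul_sub_one,
    ← pow_succ, Nat.sub_add_cancel hn]

end Module.Dual

namespace Projectivization

section DivisionRing

variable {k V : Type*} [DivisionRing k] [AddCommGroup V] [Module k V]

theorem natCard_subtype_eq_mul_natCard_units (P : V → Prop) (hP₀ : ¬P 0)
    (hP : ∀ (t : kˣ) (v : V), P (t • v) ↔ P v) :
    Nat.card {v // P v} = Nat.card {p : ℙ k V // P p.rep} * Nat.card kˣ := by
  let f : {p : ℙ k V // P p.rep} × kˣ → {v // P v} :=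
    fun x => ⟨x.2 • x.1.1.rep, (hP _ _).2 x.1.2⟩
  have hf : Function.Bijective f := by
    refine ⟨fun ⟨⟨p, _⟩, t⟩ ⟨⟨p', _⟩, t'⟩ h => ?_, fun ⟨v, hv⟩ => ?_⟩
    · have hv : t • p.rep = t' • p'.rep := congrArg Subtype.val h
      have hp : p = p' := by
        rw [← mk_rep p, ← mk_rep p', mk_eq_mk_iff]
        exact ⟨t⁻¹ * t', by rw [mul_smul, ← hv, inv_smul_smul]⟩
      subst hp
      exact Prod.ext rfl (Units.ext (smul_left_injective k p.rep_nonzero hv))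
    · have hv₀ : v ≠ 0 := fun h => hP₀ (h ▸ hv)
      obtain ⟨t, ht⟩ := (mk_eq_mk_iff k _ _ (mk k v hv₀).rep_nonzero hv₀).1 (mk_rep _)
      refine ⟨⟨⟨mk k v hv₀, ?_⟩, t⁻¹⟩, Subtype.ext ?_⟩
      · rw [← ht, hP]; exact hv
      · simp [f, ← ht]
  rw [← Nat.card_prod]
  exact (Nat.card_congr (Equiv.ofBijective f hf)).symm

end DivisionRing

variable {k V : Type*} [Field k] [Finite k] [AddCommGroup V] [Module k V] [Module.Finite k V]

theorem natCard_dual_rep_ne_zero {f : Dual k V} (hf : f ≠ 0) :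
    Nat.card {p : ℙ k V // f p.rep ≠ 0} = Nat.card k ^ (finrank k V - 1) := by
  have h := natCard_subtype_eq_mul_natCard_units (k := k) (fun v => f v ≠ 0) (by simp)
    (fun t v => by simp [Units.smul_def])
  rw [f.natCard_apply_ne_zero hf, ← Nat.card_units] at h
  exact (Nat.eq_of_mul_eq_mul_right Nat.card_pos h).symm

theorem hammingNorm_dual_rep {ι : Type*} [Fintype ι] [Fintype (ℙ k V)] [DecidableEq k]
    [DecidableEq (Dual k V)] (w : ι → Dual k V) :
    hammingNorm (fun x : ℙ k V × ι => w x.2 x.1.rep)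
      = hammingNorm w * Nat.card k ^ (finrank k V - 1) := by
  have hfiber (i : ι) : #{p : ℙ k V | w i p.rep ≠ 0}
      = if w i ≠ 0 then Nat.card k ^ (finrank k V - 1) else 0 := by
    split_ifs with hw
    · rw [← natCard_dual_rep_ne_zero hw, ← Fintype.card_subtype, Nat.card_eq_fintype_card]
    · simp_all
  simp_rw [hammingNorm, card_filter, Fintype.sum_prod_type_right, ← card_filter, hfiber,
    sum_ite, sum_const_zero, add_zero, sum_const, smul_eq_mul]

end Projectivization

theorem Module.Basis.equivFun_sum_smul_apply_eq_vecMul {R M ι m n : Type*} [CommSemiring R]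
    [AddCommMonoid M] [Module R M] [Fintype ι] [Fintype m] (e : Basis ι R M)
    (G : Matrix m n M) (Gc : ι → Matrix m n R) (hG : ∀ i j, G i j = ∑ l, Gc l i j • e l)
    (u : m → R) (j : n) :
    e.equivFun (∑ i, u i • G i j) = fun l => vecMul u (Gc l) j := by
  suffices ∑ i, u i • G i j = e.equivFun.symm fun l => vecMul u (Gc l) j by
    rw [this, LinearEquiv.apply_symm_apply]
  simp_rw [equivFun_symm_apply, hG, vecMul, dotProduct, smul_sum, smul_smul, sum_smul]
  exact sum_comm

theorem Matrix.vecMul_sum_smul_apply {R ι m n : Type*} [CommSemiring R] [Fintype ι] [Fintype m]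
    (u : m → R) (c : ι → R) (Gc : ι → Matrix m n R) (j : n) :
    vecMul u (∑ l, c l • Gc l) j = c ⬝ᵥ fun l => vecMul u (Gc l) j := by
  simp [vecMul_sum, vecMul_smul, dotProduct, Finset.sum_apply]

open Projectivization in
theorem additive_code_concatenation_weight_general
    (q h r n : ℕ) (Fq K : Type) [Field Fq] [Fintype Fq] [DecidableEq Fq]
    [Field K] [DecidableEq K] [Algebra Fq K]
    (hq : Fintype.card Fq = q)
    [Fintype (Projectivization Fq (Fin h → Fq))]
    (G : Matrix (Fin r) (Fin n) K) (e : Module.Basis (Fin h) Fq K)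
    (Gc : Fin h → Matrix (Fin r) (Fin n) Fq)
    (hG : ∀ i j, G i j = ∑ l : Fin h, Gc l i j • e l) :
    ∀ u : Fin r → Fq,
      hammingNorm (fun x : Projectivization Fq (Fin h → Fq) × Fin n =>
          Matrix.vecMul u (∑ l : Fin h, x.1.rep l • Gc l) x.2)
        = hammingNorm (fun j => ∑ i, u i • G i j) * q ^ (h - 1) := by
  intro u
  classical
  let φ : K ≃ₗ[Fq] Dual Fq (Fin h → Fq) := e.equivFun.trans (dotProductEquiv Fq (Fin h))
  have hφ (y : K) (c : Fin h → Fq) : φ y c = e.equivFun y ⬝ᵥ c := rfl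
  calc _ = hammingNorm fun x : ℙ Fq (Fin h → Fq) × Fin n => φ (∑ i, u i • G i x.2) x.1.rep := by
        simp_rw [hφ, e.equivFun_sum_smul_apply_eq_vecMul G Gc hG, vecMul_sum_smul_apply,
          dotProduct_comm]
    _ = hammingNorm (fun j => φ (∑ i, u i • G i j))
          * Nat.card Fq ^ (finrank Fq (Fin h → Fq) - 1) :=
        hammingNorm_dual_rep fun j => φ (∑ i, u i • G i j)
    _ = _ := by
      rw [hammingNorm_comp (fun _ => φ) (fun _ => φ.injective) (fun _ => map_zero φ),
        finrank_fin_fun, Nat.card_eq_fintype_card, hq]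

open Projectivization in
/-- Expansion of codeword weights: if `G = ∑ᵢ Gᵢeᵢ` over an `F_q`-basis `e` of `F_{q^h}`, and
for each point `c` of `PG(h-1,q)` we set `Ĝ_c = ∑ᵢ cᵢGᵢ`, then for every `u ∈ F_q^r`, if `uG`
has Hamming weight `w`, the concatenated vector `(uĜ_c)_c` has Hamming weight `w·q^{h-1}`. -/
theorem additive_code_concatenation_weight
    (q h r n : ℕ) (Fq K : Type) [Field Fq] [Fintype Fq] [DecidableEq Fq]
    [Field K] [Fintype K] [DecidableEq K] [Algebra Fq K]
    (hq : Fintype.card Fq = q) (hK : Fintype.card K = q ^ h) (hh : 1 ≤ h)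
    [Fintype (Projectivization Fq (Fin h → Fq))]
    (G : Matrix (Fin r) (Fin n) K) (e : Module.Basis (Fin h) Fq K)
    (Gc : Fin h → Matrix (Fin r) (Fin n) Fq)
    (hG : ∀ i j, G i j = ∑ l : Fin h, Gc l i j • e l) :
    ∀ u : Fin r → Fq,
      hammingNorm (fun x : Projectivization Fq (Fin h → Fq) × Fin n =>
          Matrix.vecMul u (∑ l : Fin h, x.1.rep l • Gc l) x.2)
        = hammingNorm (fun j => ∑ i, u i • G i j) * q ^ (h - 1) :=
  additive_code_concatenation_weight_general q h r n Fq K hq G e Gc hG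
end

section
/- Bound on d for additive MDS codes: if there is an additive MDS code over F_{q^h} of length n, F_q-dimension r > h, and minimum distance d = n - ⌈r/h⌉ + 1, writing r = (k-1)h + r_0 with k = ⌈r/h⌉ and 1 ≤ r_0 ≤ h, then d ≤ q^h - 1 + (q^h - 1)/(q^{r_0} - 1) and n ≤ k - 2 + q^h + (q^h - 1)/(q^{r_0} - 1). -/
/-!
Shortening the code on its first `k - 2` coordinates costs at most `(k - 2) h` of the
`F_q`-dimension, so it leaves `M ≥ q^(h + r₀)` codewords supported on the last `d + 1`
coordinates, still of minimum distance `d`. Each coordinate map is additive, so it vanishes on at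
least `M / q^h` of them; summing the weights of these codewords in two ways gives the Plotkin
inequality `q^h d (M - 1) ≤ (d + 1)(q^h - 1) M`, which together with `M ≥ q^h q^r₀` is the bound
on `d`. The bound on `n` is the bound on `d` rewritten through `n = k + d - 1`.
-/

open Finset

theorem AddSubgroup.card_le_card_inf_ker_mul {A B : Type*} [AddGroup A] [AddGroup B] [Finite B]
    (G : AddSubgroup A) (φ : A →+ B) :
    Nat.card G ≤ Nat.card (G ⊓ φ.ker : AddSubgroup A) * Nat.card B := by
  have hle : G ⊓ φ.ker ≤ G := inf_le_left
  calc Nat.card G = Nat.card ((G ⊓ φ.ker).addSubgroupOf G) * (G ⊓ φ.ker).relIndex G :=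
        ((G ⊓ φ.ker).addSubgroupOf G).card_mul_index.symm
    _ = Nat.card (G ⊓ φ.ker : AddSubgroup A) * Nat.card (G.map φ) := by
        rw [Nat.card_congr (AddSubgroup.addSubgroupOfEquivOfLe hle).toEquiv,
          AddSubgroup.inf_relIndex_left, AddSubgroup.relIndex_ker]
    _ ≤ Nat.card (G ⊓ φ.ker : AddSubgroup A) * Nat.card B :=
        Nat.mul_le_mul_left _ (Nat.card_le_card_of_injective _ Subtype.val_injective)

theorem AddSubgroup.card_mul_card_filter_ne_zero_le {A B : Type*} [AddGroup A] [AddGroup B]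
    [Finite B] [DecidableEq B] (G : AddSubgroup A) [Fintype G] (φ : A →+ B) :
    Nat.card B * #{v : G | φ v ≠ 0} ≤ (Nat.card B - 1) * Nat.card G := by
  have hzero : #{v : G | φ v = 0} = Nat.card (G ⊓ φ.ker : AddSubgroup A) := by
    rw [← Fintype.card_subtype, ← Nat.card_eq_fintype_card]
    exact Nat.card_congr (Equiv.subtypeSubtypeEquivSubtypeInter (· ∈ G) (φ · = 0))
  have hsplit : #{v : G | φ v = 0} + #{v : G | φ v ≠ 0} = Nat.card G := by
    rw [Nat.card_eq_fintype_card, ← card_univ]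
    exact card_filter_add_card_filter_not _
  have hker := G.card_le_card_inf_ker_mul φ
  have hB : 1 ≤ Nat.card B := Nat.card_pos
  rw [← hzero] at hker
  zify [hB] at hker hsplit ⊢
  nlinarith

def AddSubgroup.shortening {ι K : Type*} [AddGroup K] (G : AddSubgroup (ι → K)) (T : Finset ι) :
    AddSubgroup (ι → K) :=
  G ⊓ (AddMonoidHom.pi fun j : T => Pi.evalAddMonoidHom (fun _ => K) j.1).ker

theorem AddSubgroup.mem_shortening {ι K : Type*} [AddGroup K] {G : AddSubgroup (ι → K)}
    {T : Finset ι} {v : ι → K} : v ∈ G.shortening T ↔ v ∈ G ∧ ∀ j ∈ T, v j = 0 := by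
  simp [AddSubgroup.shortening, funext_iff]

theorem AddSubgroup.card_le_card_shortening_mul {ι K : Type*} [AddGroup K] [Finite K]
    (G : AddSubgroup (ι → K)) (T : Finset ι) :
    Nat.card G ≤ Nat.card (G.shortening T) * Nat.card K ^ #T := by
  have h := G.card_le_card_inf_ker_mul
    (AddMonoidHom.pi fun j : T => Pi.evalAddMonoidHom (fun _ => K) j.1)
  rwa [Nat.card_fun, Nat.card_eq_fintype_card (α := T), Fintype.card_coe] at h

theorem Submodule.card_pow_finrank_le_card_shortening_mul {F K ι : Type*} [Field F] [Fintype F]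
    [AddCommGroup K] [Module F K] [Fintype K] [Finite ι] (C : Submodule F (ι → K))
    (T : Finset ι) :
    Fintype.card F ^ Module.finrank F C ≤
      Nat.card (C.toAddSubgroup.shortening T) * Fintype.card K ^ #T := by
  rw [← Nat.card_eq_fintype_card, ← Module.natCard_eq_pow_finrank, ← Nat.card_eq_fintype_card]
  exact C.toAddSubgroup.card_le_card_shortening_mul T

theorem sum_hammingNorm_eq_sum_card_filter {ι V K : Type*} [Fintype ι] [Zero K] [DecidableEq K]
    (s : Finset V) (w : V → ι → K) :
    ∑ v ∈ s, hammingNorm (w v) = ∑ i, #{v ∈ s | w v i ≠ 0} := by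
  simp only [hammingNorm, card_filter]
  exact sum_comm

theorem AddSubgroup.plotkin_bound {ι K : Type*} [Fintype ι] [AddGroup K] [Finite K]
    [DecidableEq K] (G : AddSubgroup (ι → K)) (S : Finset ι) (hS : ∀ v ∈ G, ∀ i ∉ S, v i = 0)
    {d : ℕ} (hd : ∀ v ∈ G, v ≠ 0 → d ≤ hammingNorm v) :
    Nat.card K * (d * (Nat.card G - 1)) ≤ #S * ((Nat.card K - 1) * Nat.card G) := by
  have := Fintype.ofFinite G
  have hweight : d * (Nat.card G - 1) ≤ ∑ v : G, hammingNorm (v : ι → K) :=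
    calc d * (Nat.card G - 1) = ∑ _v ∈ univ.erase (0 : G), d := by
          rw [sum_const, card_erase_of_mem (mem_univ _), card_univ, Nat.card_eq_fintype_card,
            smul_eq_mul, mul_comm]
      _ ≤ ∑ v ∈ univ.erase (0 : G), hammingNorm (v : ι → K) :=
          sum_le_sum fun v hv => hd v v.2 (by simpa using ne_of_mem_erase hv)
      _ ≤ ∑ v : G, hammingNorm (v : ι → K) := sum_le_sum_of_subset (erase_subset _ _)
  have houtside : ∀ i ∉ S, #{v : G | (v : ι → K) i ≠ 0} = 0 := fun i hi =>
    card_eq_zero.mpr (filter_eq_empty_iff.mpr fun v _ => not_not.mpr (hS v v.2 i hi))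
  calc Nat.card K * (d * (Nat.card G - 1))
      ≤ Nat.card K * ∑ i, #{v : G | (v : ι → K) i ≠ 0} := by
        rw [← sum_hammingNorm_eq_sum_card_filter]
        exact Nat.mul_le_mul_left _ hweight
    _ = ∑ i ∈ S, Nat.card K * #{v : G | (v : ι → K) i ≠ 0} := by
        rw [mul_sum]
        refine (sum_subset (subset_univ S) fun i _ hi => ?_).symm
        rw [houtside i hi, mul_zero]
    _ ≤ ∑ _i ∈ S, (Nat.card K - 1) * Nat.card G :=
        sum_le_sum fun i _ => G.card_mul_card_filter_ne_zero_le (Pi.evalAddMonoidHom _ i)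
    _ = #S * ((Nat.card K - 1) * Nat.card G) := by rw [sum_const, smul_eq_mul]

theorem le_sub_one_add_div_of_plotkin {α : Type*} [Field α] [LinearOrder α] [IsStrictOrderedRing α]
    {Q R M d : α} (hQ : 1 ≤ Q) (hR : 1 < R) (hM : Q * R ≤ M)
    (h : Q * (d * (M - 1)) ≤ (d + 1) * ((Q - 1) * M)) :
    d ≤ Q - 1 + (Q - 1) / (R - 1) := by
  have hR1 : 0 < R - 1 := sub_pos.mpr hR
  have hMQ : 0 < M - Q := by nlinarith
  have hdM : d * (M - Q) ≤ (Q - 1) * M := by nlinarith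
  have key : d * (R - 1) ≤ R * (Q - 1) := by
    refine le_of_mul_le_mul_right ?_ hMQ
    nlinarith [mul_le_mul_of_nonneg_left hdM hR1.le]
  have hsum : Q - 1 + (Q - 1) / (R - 1) = R * (Q - 1) / (R - 1) := by
    field_simp
    ring
  rwa [hsum, le_div_iff₀ hR1]

theorem additive_MDS_d_bound_general
    (q h n r d k r0 : ℕ) (Fq K : Type) [Field Fq] [Fintype Fq] [Field K] [Fintype K]
    [DecidableEq K] [Algebra Fq K]
    (hq : Fintype.card Fq = q) (hK : Fintype.card K = q ^ h)
    (C : Submodule Fq (Fin n → K)) (hr : Module.finrank Fq C = r)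
    (hd1 : ∀ u ∈ C, u ≠ 0 → d ≤ hammingNorm u)
    (hrk : r = (k - 1) * h + r0) (hr01 : 1 ≤ r0) (hr02 : r0 ≤ h) (hrh : h < r)
    (hMDS : (n : ℤ) = (k : ℤ) + (d : ℤ) - 1) :
    (d : ℚ) ≤ (q : ℚ) ^ h - 1 + ((q : ℚ) ^ h - 1) / ((q : ℚ) ^ r0 - 1) ∧
    (n : ℚ) ≤ (k : ℚ) - 2 + (q : ℚ) ^ h + ((q : ℚ) ^ h - 1) / ((q : ℚ) ^ r0 - 1) := by
  classical
  have hq1 : 1 < q := hq ▸ Fintype.one_lt_card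
  have hk2 : 2 ≤ k := by
    by_contra! hk
    interval_cases k <;> simp at hrk <;> omega
  set T : Finset (Fin n) := {j | j.val < k - 2}
  set G := C.toAddSubgroup.shortening T
  have hT : #T = k - 2 := by rw [Fin.card_filter_val_lt]; omega
  have hTc : #Tᶜ = d + 1 := by rw [card_compl, hT, Fintype.card_fin]; omega
  have hr' : r = h * (k - 2) + (h + r0) := by
    rw [hrk, show k - 1 = k - 2 + 1 by omega]
    ring
  have hG : q ^ (h + r0) ≤ Nat.card G := by
    have hshort := C.card_pow_finrank_le_card_shortening_mul T
    rw [hq, hK, hr, hT, ← pow_mul, hr', pow_add, mul_comm] at hshort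
    exact Nat.le_of_mul_le_mul_right hshort (by positivity)
  have hplotkin := G.plotkin_bound Tᶜ
    (fun v hv i hi => (AddSubgroup.mem_shortening.mp hv).2 i (by simpa using hi))
    (fun v hv => hd1 v (AddSubgroup.mem_shortening.mp hv).1)
  rw [hTc, Nat.card_eq_fintype_card (α := K), hK] at hplotkin
  zify [(Nat.card_pos : 0 < Nat.card G), Nat.one_le_pow h q (by omega)] at hplotkin
  have hd := le_sub_one_add_div_of_plotkin (Q := (q : ℚ) ^ h) (R := (q : ℚ) ^ r0)
    (M := (Nat.card G : ℚ)) (d := (d : ℚ))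
    (one_le_pow₀ (by exact_mod_cast hq1.le)) (one_lt_pow₀ (by exact_mod_cast hq1) (by omega))
    (by rw [← pow_add]; exact_mod_cast hG) (by exact_mod_cast hplotkin)
  refine ⟨hd, ?_⟩
  have hn : (n : ℚ) = k + d - 1 := by exact_mod_cast hMDS
  linarith

/-- Bound on `d` and `n` for additive MDS codes: if there is an additive MDS code over `F_{q^h}`
of length `n`, `F_q`-dimension `r = (k-1)h + r₀ > h` with `k = ⌈r/h⌉`, `1 ≤ r₀ ≤ h`, and
minimum distance `d = n - k + 1`, then `d ≤ q^h - 1 + (q^h-1)/(q^{r₀}-1)` and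
`n ≤ k - 2 + q^h + (q^h-1)/(q^{r₀}-1)`. -/
theorem additive_MDS_d_bound
    (q h n r d k r0 : ℕ) (Fq K : Type) [Field Fq] [Fintype Fq] [Field K] [Fintype K]
    [DecidableEq K] [Algebra Fq K]
    (hq : Fintype.card Fq = q) (hK : Fintype.card K = q ^ h)
    (C : Submodule Fq (Fin n → K)) (hr : Module.finrank Fq C = r)
    (hd1 : ∀ u ∈ C, u ≠ 0 → d ≤ hammingNorm u)
    (hd2 : ∃ u ∈ C, u ≠ 0 ∧ hammingNorm u = d)
    (hk : (k : ℤ) = ⌈(r : ℚ) / (h : ℚ)⌉)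
    (hrk : r = (k - 1) * h + r0) (hr01 : 1 ≤ r0) (hr02 : r0 ≤ h) (hrh : h < r)
    (hMDS : (n : ℤ) = (k : ℤ) + (d : ℤ) - 1) :
    (d : ℚ) ≤ (q : ℚ) ^ h - 1 + ((q : ℚ) ^ h - 1) / ((q : ℚ) ^ r0 - 1) ∧
    (n : ℚ) ≤ (k : ℚ) - 2 + (q : ℚ) ^ h + ((q : ℚ) ^ h - 1) / ((q : ℚ) ^ r0 - 1) :=
  additive_MDS_d_bound_general q h n r d k r0 Fq K hq hK C hr hd1 hrk hr01 hr02 hrh hMDS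
end

section
/- Bound on k for additive MDS codes: if there is an additive code C over F_{q^h} of length n ≥ k + 2, F_q-dimension kh (k ∈ ℕ), and minimum distance d = n - k + 1 (MDS), then k ≤ q^h - 1. -/
/-!
Puncture the code to `k + 2` coordinates. Its minimum distance stays at least `3`, and since a
codeword vanishing on `k` coordinates of the original code is zero, the first `k` coordinates
form an information set of the punctured code. For information part `Pi.single i c` with
`c ≠ 0`, both check coordinates of its codeword are nonzero, and distinct `(i, c)` give
distinct pairs of check values; otherwise some nonzero codeword has weight at most `2`. Hence
`k (q^h - 1) ≤ (q^h - 1)²`.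
-/

open Finset Function

section HammingNorm

variable {ι K : Type*} [Fintype ι] [Zero K] [DecidableEq K]

theorem hammingNorm_le_card_of_support_subset {u : ι → K} (S : Finset ι)
    (h : ∀ t, u t ≠ 0 → t ∈ S) : hammingNorm u ≤ #S :=
  card_le_card fun t ht => h t (mem_filter.mp ht).2

theorem hammingNorm_le_two_of_support_subset {u : ι → K} {a b : ι}
    (h : ∀ t, u t ≠ 0 → t = a ∨ t = b) : hammingNorm u ≤ 2 := by
  classical
  exact (hammingNorm_le_card_of_support_subset {a, b} (by simpa using h)).trans card_le_two

theorem hammingNorm_le_hammingNorm_comp_add {ι' : Type*} [Fintype ι'] {τ : ι' → ι}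
    (hτ : Injective τ) (u : ι → K) :
    hammingNorm u ≤ hammingNorm (u ∘ τ) + (Fintype.card ι - Fintype.card ι') := by
  classical
  calc hammingNorm u ≤ #(({i | u (τ i) ≠ 0} : Finset ι').image τ ∪ univ \ univ.image τ) := by
        refine hammingNorm_le_card_of_support_subset _ fun t ht => ?_
        by_cases hmem : t ∈ univ.image τ
        · obtain ⟨i, -, rfl⟩ := mem_image.mp hmem
          exact mem_union_left _ (mem_image_of_mem τ (by simpa using ht))
        · exact mem_union_right _ (mem_sdiff.mpr ⟨mem_univ t, hmem⟩)
    _ ≤ _ := by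
        refine (card_union_le _ _).trans (add_le_add card_image_le ?_)
        rw [card_sdiff_of_subset (subset_univ _), card_image_of_injective _ hτ]
        rfl

end HammingNorm

theorem exists_mem_comp_eq_of_natCard_eq {ι ι' K : Type*} [Fintype ι] [Fintype ι']
    [AddCommGroup K] [Finite K] [DecidableEq K] {C : AddSubgroup (ι → K)} {d : ℕ}
    (hd : ∀ u ∈ C, u ≠ 0 → d ≤ hammingNorm u) {σ : ι' → ι} (hσ : Injective σ)
    (hσd : Fintype.card ι < d + Fintype.card ι') (hC : Nat.card C = Nat.card (ι' → K))
    (x : ι' → K) : ∃ u ∈ C, u ∘ σ = x := by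
  have hinj : Injective fun u : C => (u : ι → K) ∘ σ := by
    intro u v huv
    by_contra hne
    have hsub : (u - v : ι → K) ≠ 0 := sub_ne_zero.mpr (Subtype.coe_ne_coe.mpr hne)
    have hσ0 : (u - v : ι → K) ∘ σ = 0 := by
      ext i
      simpa [sub_eq_zero] using congrFun huv i
    have := (hd _ (sub_mem u.2 v.2) hsub).trans (hammingNorm_le_hammingNorm_comp_add hσ _)
    rw [hσ0, hammingNorm_zero] at this
    have := Fintype.card_le_of_injective σ hσ
    omega
  obtain ⟨u, hu⟩ := (hinj.bijective_of_nat_card_le hC.ge).2 x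
  exact ⟨u, u.2, hu⟩

section SystematicDistanceThree

variable {κ K : Type*} [Fintype κ] [DecidableEq κ] [AddCommGroup K] [DecidableEq K]
  {C : AddSubgroup (κ ⊕ Fin 2 → K)}

theorem apply_inr_ne_zero_of_comp_inl_eq_single (hd : ∀ u ∈ C, u ≠ 0 → 3 ≤ hammingNorm u)
    {u : κ ⊕ Fin 2 → K} (hu : u ∈ C) {i : κ} {c : K} (hc : c ≠ 0)
    (hui : u ∘ Sum.inl = Pi.single i c) (j : Fin 2) : u (.inr j) ≠ 0 := by
  intro hj
  have hu0 : u = 0 := by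
    by_contra hne
    have hsupp : ∀ t, u t ≠ 0 → t = .inl i ∨ t = .inr j.rev := by
      rintro (m | j') ht
      · left
        by_contra hm
        exact ht (by simpa [Pi.single_apply, Sum.inl_injective.ne_iff.mp hm] using congrFun hui m)
      · right
        have hj' : j' ≠ j := by rintro rfl; exact ht hj
        congr 1
        ext
        simp only [Fin.val_rev]
        omega
    have := hd u hu hne
    have := hammingNorm_le_two_of_support_subset hsupp
    omega
  subst hu0
  exact hc (by simpa using (congrFun hui i).symm)

theorem eq_of_comp_inl_eq_single_of_comp_inr_eq (hd : ∀ u ∈ C, u ≠ 0 → 3 ≤ hammingNorm u)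
    {u v : κ ⊕ Fin 2 → K} (hu : u ∈ C) (hv : v ∈ C) {i j : κ} {c c' : K}
    (hui : u ∘ Sum.inl = Pi.single i c) (hvj : v ∘ Sum.inl = Pi.single j c')
    (huv : u ∘ Sum.inr = v ∘ Sum.inr) : u = v := by
  rw [← sub_eq_zero]
  by_contra hne
  have hsupp : ∀ t, (u - v) t ≠ 0 → t = .inl i ∨ t = .inl j := by
    rintro (m | j') ht
    · by_contra hm
      simp only [not_or, Sum.inl.injEq] at hm
      apply ht
      simpa [Pi.single_apply, hm.1, hm.2] using congrArg (· m) (congrArg₂ (· - ·) hui hvj)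
    · exact absurd (by simpa [sub_eq_zero] using congrFun huv j') ht
  have := hd _ (sub_mem hu hv) hne
  have := hammingNorm_le_two_of_support_subset hsupp
  omega

theorem card_le_card_sub_one_of_minDist_three [Fintype K] [Nontrivial K]
    (hd : ∀ u ∈ C, u ≠ 0 → 3 ≤ hammingNorm u) (hsurj : ∀ x : κ → K, ∃ u ∈ C, u ∘ Sum.inl = x) :
    Fintype.card κ ≤ Fintype.card K - 1 := by
  choose enc henc_mem henc using hsurj
  let φ : κ × {c : K // c ≠ 0} → Fin 2 → {y : K // y ≠ 0} := fun ic j =>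
    ⟨enc (Pi.single ic.1 ic.2) (.inr j),
      apply_inr_ne_zero_of_comp_inl_eq_single hd (henc_mem _) ic.2.2 (henc _) j⟩
  have hφ : Injective φ := by
    rintro ⟨i, c, hc⟩ ⟨i', c', hc'⟩ h
    have huv := eq_of_comp_inl_eq_single_of_comp_inr_eq hd (henc_mem _) (henc_mem _) (henc _)
      (henc _) (funext fun j => congrArg Subtype.val (congrFun h j))
    have hs : (Pi.single i c : κ → K) = Pi.single i' c' := by
      simpa only [henc] using congrArg (· ∘ Sum.inl) huv
    obtain rfl : i = i' := by
      by_contra hne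
      exact hc (by simpa [hne] using congrFun hs i)
    obtain rfl : c = c' := by simpa using congrFun hs i
    rfl
  have hcard := Fintype.card_le_of_injective φ hφ
  simp only [ne_eq, Fintype.card_prod, Fintype.card_subtype_compl, Fintype.card_unique,
    Fintype.card_pi, prod_const, card_univ, Fintype.card_fin] at hcard
  rw [sq] at hcard
  exact Nat.le_of_mul_le_mul_right hcard (Nat.sub_pos_of_lt Fintype.one_lt_card)

end SystematicDistanceThree

theorem additive_MDS_k_bound_general
    (q h n k d : ℕ) (Fq K : Type) [Field Fq] [Fintype Fq] [Field K] [Fintype K]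
    [DecidableEq K] [Algebra Fq K]
    (hq : Fintype.card Fq = q) (hK : Fintype.card K = q ^ h)
    (C : Submodule Fq (Fin n → K)) (hrk : Module.finrank Fq C = k * h)
    (hd1 : ∀ u ∈ C, u ≠ 0 → d ≤ hammingNorm u)
    (hMDS : d + k = n + 1) (hn : k + 2 ≤ n) :
    k ≤ q ^ h - 1 := by
  have hcardC : Nat.card C = Nat.card (Fin k → K) := by
    rw [Module.natCard_eq_pow_finrank (K := Fq), hrk, Nat.card_fun, Nat.card_eq_fintype_card,
      Nat.card_eq_fintype_card, Nat.card_fin, hq, hK, ← pow_mul, mul_comm h k]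
  let τ : Fin k ⊕ Fin 2 → Fin n := Fin.castLE hn ∘ finSumFinEquiv
  have hτ : Injective τ := (Fin.castLE_injective hn).comp finSumFinEquiv.injective
  let C' := (C.map (LinearMap.funLeft Fq K τ)).toAddSubgroup
  have hd' : ∀ v ∈ C', v ≠ 0 → 3 ≤ hammingNorm v := by
    rintro _ ⟨u, hu, rfl⟩ hne
    change 3 ≤ hammingNorm (u ∘ τ)
    have := (hd1 u hu (by rintro rfl; exact hne rfl)).trans
      (hammingNorm_le_hammingNorm_comp_add hτ u)
    simp only [Fintype.card_fin, Fintype.card_sum] at this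
    omega
  have hsurj : ∀ x : Fin k → K, ∃ v ∈ C', v ∘ Sum.inl = x := by
    intro x
    obtain ⟨u, hu, rfl⟩ := exists_mem_comp_eq_of_natCard_eq (C := C.toAddSubgroup) hd1
      (hτ.comp Sum.inl_injective) (by simp only [Fintype.card_fin]; omega) hcardC x
    exact ⟨u ∘ τ, ⟨u, hu, rfl⟩, rfl⟩
  simpa [hK] using card_le_card_sub_one_of_minDist_three hd' hsurj

/-- Bound on `k` for additive MDS codes: if there is an additive code over `F_{q^h}` of length
`n ≥ k + 2`, `F_q`-dimension `kh`, and minimum distance `d = n - k + 1` (MDS), then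
`k ≤ q^h - 1`. -/
theorem additive_MDS_k_bound
    (q h n k d : ℕ) (Fq K : Type) [Field Fq] [Fintype Fq] [Field K] [Fintype K]
    [DecidableEq K] [Algebra Fq K]
    (hq : Fintype.card Fq = q) (hK : Fintype.card K = q ^ h)
    (C : Submodule Fq (Fin n → K)) (hrk : Module.finrank Fq C = k * h)
    (hd1 : ∀ u ∈ C, u ≠ 0 → d ≤ hammingNorm u)
    (hd2 : ∃ u ∈ C, u ≠ 0 ∧ hammingNorm u = d)
    (hMDS : d + k = n + 1) (hn : k + 2 ≤ n) :
    k ≤ q ^ h - 1 :=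
  additive_MDS_k_bound_general q h n k d Fq K hq hK C hrk hd1 hMDS hn
end

section
/- A faithful additive code C over F_{q^h} has minimum distance d ≥ 2 if and only if its trace dual C^⊥ is faithful with minimum distance d^⊥ ≥ 2. (Equivalently: C is unfaithful if and only if d^⊥ = 1, where unfaithfulness of C means some coordinate of C takes values in a proper F_q-subspace of F_{q^h}.) -/
/-!
The trace form `⟪u, v⟫ = Tr (∑ i, u i * v i)` on `L^ι` is symmetric and nondegenerate, so
`C^⊥⊥ = C`. A weight-one vector `a • eᵢ` lies in `C^⊥` exactly when `a` is trace-orthogonal to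
the `i`-th coordinate projection `Cᵢ` of `C`, and a nonzero such `a` exists exactly when `Cᵢ` is a
proper subspace. Hence `C` is unfaithful iff `C^⊥` has minimum distance one, and applying this to
`C^⊥` gives the symmetric statement.
-/

open Module LinearMap.BilinForm

section HammingWeightOne

variable {ι β : Type*} [Fintype ι] [DecidableEq ι] [Zero β] [DecidableEq β]

theorem hammingNorm_single_le_one (i : ι) (a : β) : hammingNorm (Pi.single i a : ι → β) ≤ 1 := by
  refine Finset.card_le_one.mpr fun j hj k hk => ?_
  simp only [Finset.mem_filter, Finset.mem_univ, true_and] at hj hk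
  have mem_support : ∀ j, (Pi.single i a : ι → β) j ≠ 0 → j = i := fun j hj =>
    by_contra fun hji => hj (Pi.single_eq_of_ne hji _)
  exact (mem_support j hj).trans (mem_support k hk).symm

theorem eq_single_of_hammingNorm_le_one {v : ι → β} (hv : hammingNorm v ≤ 1) {i : ι}
    (hi : v i ≠ 0) : v = Pi.single i (v i) := by
  ext j
  rcases eq_or_ne j i with rfl | hji
  · simp
  · rw [Pi.single_eq_of_ne hji]
    by_contra hj
    exact hji (Finset.card_le_one.mp hv j (by simpa using hj) i (by simpa using hi))

theorem forall_two_le_hammingNorm_iff {S : Type*} [SetLike S (ι → β)] (C : S) :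
    (∀ v ∈ C, v ≠ 0 → 2 ≤ hammingNorm v) ↔ ¬∃ i a, a ≠ 0 ∧ Pi.single i a ∈ C := by
  push Not
  constructor
  · intro h i a ha hS
    have two_le := h _ hS (by simpa using ha)
    have le_one := hammingNorm_single_le_one i a
    omega
  · intro h v hS hv
    by_contra! hlt
    obtain ⟨i, hi⟩ := Function.ne_iff.mp hv
    exact h i (v i) hi (eq_single_of_hammingNorm_le_one (by omega) hi ▸ hS)

end HammingWeightOne

theorem Submodule.exists_finrank_lt_and_le_iff_ne_top {K V : Type*} [DivisionRing K]
    [AddCommGroup V] [Module K V] [FiniteDimensional K V] (N : Submodule K V) :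
    (∃ W : Submodule K V, finrank K W < finrank K V ∧ N ≤ W) ↔ N ≠ ⊤ := by
  constructor
  · rintro ⟨W, hW, hNW⟩ rfl
    rw [top_le_iff.mp hNW, finrank_top] at hW
    exact hW.false
  · exact fun hN => ⟨N, Submodule.finrank_lt hN, le_rfl⟩

theorem LinearMap.BilinForm.Nondegenerate.orthogonal_eq_bot_iff {K V : Type*} [Field K]
    [AddCommGroup V] [Module K V] [FiniteDimensional K V] {B : LinearMap.BilinForm K V}
    (hB : B.Nondegenerate) (hB₀ : B.IsRefl) {N : Submodule K V} : B.orthogonal N = ⊥ ↔ N = ⊤ := by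
  constructor
  · intro h
    rw [← orthogonal_orthogonal hB hB₀ N, h, orthogonal_bot]
  · rintro rfl
    exact orthogonal_top_eq_bot hB

noncomputable def traceDotForm (R S ι : Type*) [CommRing R] [CommRing S] [Algebra R S]
    [Fintype ι] : LinearMap.BilinForm R (ι → S) :=
  ∑ i, (Algebra.traceForm R S).compl₁₂ (LinearMap.proj i) (LinearMap.proj i)

section traceDotForm

variable {R S ι : Type*} [CommRing R] [CommRing S] [Algebra R S] [Fintype ι]

theorem traceDotForm_apply (u v : ι → S) :
    traceDotForm R S ι u v = Algebra.trace R S (∑ i, u i * v i) := by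
  simp [traceDotForm, LinearMap.sum_apply, map_sum, Algebra.traceForm_apply]

theorem traceDotForm_isSymm : (traceDotForm R S ι).IsSymm :=
  ⟨fun u v => by simp only [traceDotForm_apply, mul_comm]⟩

theorem traceDotForm_single [DecidableEq ι] (u : ι → S) (i : ι) (a : S) :
    traceDotForm R S ι u (Pi.single i a) = Algebra.traceForm R S (u i) a := by
  simp [traceDotForm_apply, Algebra.traceForm_apply, Pi.single_apply]

theorem single_mem_orthogonal_traceDotForm_iff [DecidableEq ι] (C : Submodule R (ι → S)) (i : ι)
    (a : S) :
    Pi.single i a ∈ (traceDotForm R S ι).orthogonal C ↔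
      a ∈ (Algebra.traceForm R S).orthogonal (C.map (LinearMap.proj i)) := by
  simp [mem_orthogonal_iff, traceDotForm_single]

end traceDotForm

section traceDotForm_field

variable {K L ι : Type*} [Field K] [Field L] [Algebra K L] [FiniteDimensional K L]
  [Algebra.IsSeparable K L] [Fintype ι] [DecidableEq ι]

theorem traceDotForm_nondegenerate : (traceDotForm K L ι).Nondegenerate := by
  refine Nondegenerate.ofSeparatingLeft fun u hu => funext fun i => ?_
  refine (traceForm_nondegenerate K L).1 (u i) fun a => ?_
  rw [← traceDotForm_single]
  exact hu _

theorem exists_single_mem_orthogonal_traceDotForm_iff (C : Submodule K (ι → L)) (i : ι) :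
    (∃ a ≠ 0, Pi.single i a ∈ (traceDotForm K L ι).orthogonal C) ↔
      C.map (LinearMap.proj i) ≠ ⊤ := by
  rw [Ne, ← (traceForm_nondegenerate K L).orthogonal_eq_bot_iff
    (Algebra.traceForm_isSymm K).isRefl, ← Ne, Submodule.ne_bot_iff]
  simp only [single_mem_orthogonal_traceDotForm_iff, and_comm]

theorem exists_finrank_lt_forall_apply_mem_iff (C : Submodule K (ι → L)) :
    (∃ i, ∃ W : Submodule K L, finrank K W < finrank K L ∧ ∀ u ∈ C, u i ∈ W) ↔
      ∃ i a, a ≠ 0 ∧ Pi.single i a ∈ (traceDotForm K L ι).orthogonal C := by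
  refine exists_congr fun i => ?_
  rw [exists_single_mem_orthogonal_traceDotForm_iff,
    ← Submodule.exists_finrank_lt_and_le_iff_ne_top]
  simp [SetLike.le_def]

end traceDotForm_field

theorem additive_code_faithful_dual_iff_general
    (h n : ℕ) (Fq K : Type) [Field Fq] [Field K] [Fintype K]
    [DecidableEq K] [Algebra Fq K]
    (hfr : Module.finrank Fq K = h)
    (C : Submodule Fq (Fin n → K))
    (D : Set (Fin n → K))
    (hD : D = {v | ∀ u ∈ C, Algebra.trace Fq K (∑ i, u i * v i) = 0}) :
    ((¬ ∃ i : Fin n, ∃ W : Submodule Fq K, Module.finrank Fq W < h ∧ ∀ u ∈ C, u i ∈ W) ∧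
      (∀ u ∈ C, u ≠ 0 → 2 ≤ hammingNorm u))
    ↔
    ((¬ ∃ i : Fin n, ∃ W : Submodule Fq K, Module.finrank Fq W < h ∧ ∀ v ∈ D, v i ∈ W) ∧
      (∀ v ∈ D, v ≠ 0 → 2 ≤ hammingNorm v)) := by
  have hD : D = (traceDotForm Fq K (Fin n)).orthogonal C := by
    ext v
    simp [hD, mem_orthogonal_iff, traceDotForm_apply]
  have hC : (traceDotForm Fq K (Fin n)).orthogonal
      ((traceDotForm Fq K (Fin n)).orthogonal C) = C :=
    orthogonal_orthogonal traceDotForm_nondegenerate traceDotForm_isSymm.isRefl C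
  subst hD hfr
  simp only [SetLike.mem_coe, forall_two_le_hammingNorm_iff,
    exists_finrank_lt_forall_apply_mem_iff, hC]
  tauto

/-- A faithful additive code `C` over `F_{q^h}` has minimum distance `≥ 2` if and only if its
trace dual `C^⊥` is faithful with minimum distance `≥ 2`. (Unfaithful means some coordinate
takes values inside an `F_q`-subspace of `F_{q^h}` of dimension at most `h - 1`.) -/
theorem additive_code_faithful_dual_iff
    (q h n : ℕ) (Fq K : Type) [Field Fq] [Fintype Fq] [Field K] [Fintype K]
    [DecidableEq K] [Algebra Fq K]
    (hq : Fintype.card Fq = q) (hK : Fintype.card K = q ^ h)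
    (hfr : Module.finrank Fq K = h)
    (C : Submodule Fq (Fin n → K))
    (D : Set (Fin n → K))
    (hD : D = {v | ∀ u ∈ C, Algebra.trace Fq K (∑ i, u i * v i) = 0}) :
    ((¬ ∃ i : Fin n, ∃ W : Submodule Fq K, Module.finrank Fq W < h ∧ ∀ u ∈ C, u i ∈ W) ∧
      (∀ u ∈ C, u ≠ 0 → 2 ≤ hammingNorm u))
    ↔
    ((¬ ∃ i : Fin n, ∃ W : Submodule Fq K, Module.finrank Fq W < h ∧ ∀ v ∈ D, v i ∈ W) ∧
      (∀ v ∈ D, v ≠ 0 → 2 ≤ hammingNorm v)) :=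
  additive_code_faithful_dual_iff_general h n Fq K hfr C D hD
end

section
/- Construction of fractional MDS codes for k = 2: suppose r_0 divides h and let n = (q^{h+r_0} - 1)/(q^{r_0} - 1) = q^h + (q^h - 1)/(q^{r_0} - 1). Let A be a set of representatives of the one-dimensional F_{q^{r_0}}-subspaces of F_{q^{h+r_0}}, let w be a primitive element of F_{q^{h+r_0}}, and let {1, α, ..., α^{h/r_0 - 1}} be an F_{q^{r_0}}-basis of F_{q^h}. Define, for each x ∈ F_{q^{h+r_0}}, the vector c(x) ∈ (F_{q^h})^n with coordinate indexed by a ∈ A equal to Σ_{j=0}^{h/r_0 - 1} Tr(x a w^j) α^j, where Tr is the trace from F_{q^{h+r_0}} to F_{q^{r_0}}. Then C = {c(x) : x ∈ F_{q^{h+r_0}}} is an additive code of size q^{h+r_0} and minimum distance n - 1; in particular, for each nonzero x, there is exactly one a ∈ A with c(x)_a = 0. -/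
/-! For `x ≠ 0`, linear independence of the `α ^ j` shows that `c x` vanishes at a point `p`
exactly when `p.rep` is trace-orthogonal to `x, x w, …, x w ^ (m - 1)`. Since `w` generates `L`,
these are `m` independent vectors of the `(m + 1)`-dimensional `F`-space `L`, and the trace form
of the separable extension `L / F` is nondegenerate, so their orthogonal complement is a line,
i.e. a single point of `ℙ F L`. The same nondegeneracy (with `j = 0`) makes `c` injective. -/

open Module Submodule Projectivization IntermediateField LinearMap
open scoped LinearAlgebra.Projectivization

theorem Projectivization.linearMap_eq_zero_of_forall_rep {K V W : Type*} [DivisionRing K]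
    [AddCommGroup V] [Module K V] [AddCommGroup W] [Module K W] {f : V →ₗ[K] W}
    (h : ∀ p : ℙ K V, f p.rep = 0) : f = 0 := by
  ext v
  by_cases hv : v = 0
  · simp [hv]
  obtain ⟨a, ha⟩ := exists_smul_eq_mk_rep K v hv
  simpa [← ha, smul_eq_zero_iff_eq] using h (mk K v hv)

theorem Projectivization.existsUnique_rep_mem {K V : Type*} [DivisionRing K] [AddCommGroup V]
    [Module K V] {W : Submodule K V} (hW : finrank K W = 1) : ∃! p : ℙ K V, p.rep ∈ W := by
  have : FiniteDimensional K W := .of_finrank_pos (by omega)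
  refine ⟨mk'' W hW, ?_, fun p hp => submodule_injective ?_⟩
  · have h := (mk'' W hW).submodule_eq
    rw [submodule_mk''] at h
    exact (SetLike.ext_iff.1 h _).2 (mem_span_singleton_self _)
  · rw [submodule_mk'']
    exact eq_of_le_of_finrank_eq (by simpa [submodule_eq] using hp)
      (by rw [finrank_submodule, hW])

theorem LinearMap.BilinForm.mem_orthogonal_span_range_iff {R M ι : Type*} [CommRing R]
    [AddCommGroup M] [Module R M] {B : LinearMap.BilinForm R M} {u : ι → M} {v : M} :
    v ∈ B.orthogonal (span R (Set.range u)) ↔ ∀ i, B (u i) v = 0 := by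
  exact ⟨fun h i => h _ (subset_span ⟨i, rfl⟩),
    fun h _ hn => (span_le (p := ker (B.flip v))).2 (Set.range_subset_iff.2 h) hn⟩

theorem Module.finrank_eq_of_card_eq_pow {K V : Type*} [DivisionRing K] [AddCommGroup V]
    [Module K V] [Fintype K] [Fintype V] {q r n : ℕ} (hq : 2 ≤ q) (hr : 0 < r)
    (hK : Fintype.card K = q ^ r) (hV : Fintype.card V = q ^ (r * n)) : finrank K V = n := by
  rw [card_eq_pow_finrank (K := K), hK, ← pow_mul] at hV
  exact Nat.eq_of_mul_eq_mul_left hr (Nat.pow_right_injective hq hV)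

theorem linearIndependent_pow_of_forall_eq_pow {F L : Type*} [Field F] [Field L] [Algebra F L]
    [FiniteDimensional F L] {w : L} (hw : ∀ z : L, z ≠ 0 → ∃ t : ℕ, z = w ^ t) {n : ℕ}
    (hn : n ≤ finrank F L) : LinearIndependent F fun j : Fin n => w ^ (j : ℕ) := by
  have htop : F⟮w⟯ = ⊤ := eq_top_iff.2 fun z _ => by
    rcases eq_or_ne z 0 with rfl | hz
    · exact zero_mem _
    obtain ⟨t, rfl⟩ := hw z hz
    exact pow_mem (mem_adjoin_simple_self F w) t
  have hdeg : (minpoly F w).natDegree = finrank F L := by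
    rw [← adjoin.finrank (.of_finite F w), htop, finrank_top']
  exact (hdeg ▸ linearIndependent_pow w).comp (Fin.castLE hn) (Fin.castLE_injective hn)

theorem hammingNorm_eq_card_sub_one_of_existsUnique {ι : Type*} {β : ι → Type*} [Fintype ι]
    [∀ i, DecidableEq (β i)] [∀ i, Zero (β i)] {x : ∀ i, β i} (h : ∃! i, x i = 0) :
    hammingNorm x = Fintype.card ι - 1 := by
  classical
  obtain ⟨i, hi, huniq⟩ := h
  have : ({j | x j ≠ 0} : Finset ι) = Finset.univ.erase i := by
    ext j
    simp only [Finset.mem_filter, Finset.mem_univ, true_and, Finset.mem_erase, and_true]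
    exact ⟨fun hj hji => hj (hji ▸ hi), fun hji hj => hji (huniq j hj)⟩
  rw [hammingNorm, this, Finset.card_erase_of_mem (Finset.mem_univ _), Finset.card_univ]

section TraceCode

variable (F : Type*) {E L : Type*} [Field F] [Field E] [Field L] [Algebra F E] [Algebra F L]

noncomputable def traceCode (m : ℕ) (α : E) (w : L) : L →+ (ℙ F L → E) :=
  AddMonoidHom.mk'
    (fun x p => ∑ j : Fin m, Algebra.trace F L (x * p.rep * w ^ (j : ℕ)) • α ^ (j : ℕ))
    (fun x y => by ext p; simp only [add_mul, map_add, add_smul, Finset.sum_add_distrib,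
      Pi.add_apply])

variable {F} {m : ℕ} {α : E} {w : L}

theorem traceCode_apply (x : L) (p : ℙ F L) : traceCode F m α w x p =
    ∑ j : Fin m, Algebra.trace F L (x * p.rep * w ^ (j : ℕ)) • α ^ (j : ℕ) := rfl

theorem traceCode_eq_zero_iff (hα : LinearIndependent F fun j : Fin m => α ^ (j : ℕ))
    {x : L} {p : ℙ F L} : traceCode F m α w x p = 0 ↔
      p.rep ∈ (Algebra.traceForm F L).orthogonal
        (span F (Set.range fun j : Fin m => x * w ^ (j : ℕ))) := by
  simp_rw [LinearMap.BilinForm.mem_orthogonal_span_range_iff, Algebra.traceForm_apply,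
    mul_right_comm x (w ^ _) p.rep, traceCode_apply]
  exact ⟨Fintype.linearIndependent_iff.1 hα _,
    fun h => Finset.sum_eq_zero fun j _ => by rw [h j, zero_smul]⟩

variable [FiniteDimensional F L] [Algebra.IsSeparable F L]

theorem traceCode_injective (hα : LinearIndependent F fun j : Fin m => α ^ (j : ℕ))
    (hm : 0 < m) : Function.Injective (traceCode F m α w) := by
  refine (injective_iff_map_eq_zero _).2 fun z hz => ?_
  have htrace : ∀ p : ℙ F L, Algebra.traceForm F L z p.rep = 0 := fun p => by
    simpa using LinearMap.BilinForm.mem_orthogonal_span_range_iff.1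
      ((traceCode_eq_zero_iff hα).1 (congrFun hz p)) ⟨0, hm⟩
  exact (traceForm_nondegenerate F L).1 z
    (LinearMap.congr_fun (linearMap_eq_zero_of_forall_rep htrace))

theorem existsUnique_traceCode_eq_zero (hα : LinearIndependent F fun j : Fin m => α ^ (j : ℕ))
    (hw : LinearIndependent F fun j : Fin m => w ^ (j : ℕ)) (hrank : finrank F L = m + 1)
    {x : L} (hx : x ≠ 0) : ∃! p : ℙ F L, traceCode F m α w x p = 0 := by
  have hxw : LinearIndependent F fun j : Fin m => x * w ^ (j : ℕ) :=
    hw.map' (LinearMap.mulLeft F x) (LinearMap.ker_eq_bot.2 (mul_right_injective₀ hx))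
  simp_rw [traceCode_eq_zero_iff hα]
  apply existsUnique_rep_mem
  rw [LinearMap.BilinForm.finrank_orthogonal (traceForm_nondegenerate F L),
    finrank_span_eq_card hxw, hrank, Fintype.card_fin, Nat.add_sub_cancel_left]

end TraceCode

open Projectivization in
/-- Construction of fractional MDS codes for `k = 2`: with `F = F_{q^{r₀}}`, `E = F_{q^h}`,
`L = F_{q^{h+r₀}}` (where `r₀ ∣ h`, `m = h/r₀`), coordinates indexed by representatives of the
points of `PG(h/r₀, q^{r₀})` (the projectivization of `L` over `F`), a primitive element `w`
of `L` and `F`-linearly independent powers `1, α, …, α^{m-1}` in `E`, the map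
`c(x)_a = ∑_j Tr_{L→F}(x a w^j) α^j` defines an additive code of size `q^{h+r₀}` and minimum
distance `n - 1`: for each nonzero `x` there is exactly one point where `c(x)` vanishes. -/
theorem fractional_MDS_construction_k2
    (q h r0 m : ℕ) (F E L : Type)
    [Field F] [Fintype F] [Field E] [Fintype E] [DecidableEq E]
    [Field L] [Fintype L] [Algebra F E] [Algebra F L]
    [Fintype (Projectivization F L)]
    (hq : 2 ≤ q) (hr01 : 1 ≤ r0) (hdvd : r0 ∣ h) (hm : m = h / r0)
    (hF : Fintype.card F = q ^ r0) (hE : Fintype.card E = q ^ h)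
    (hL : Fintype.card L = q ^ (h + r0))
    (α : E) (hα : LinearIndependent F (fun j : Fin m => α ^ (j : ℕ)))
    (w : L) (hw : ∀ z : L, z ≠ 0 → ∃ t : ℕ, z = w ^ t)
    (c : L → Projectivization F L → E)
    (hc : ∀ x p, c x p =
      ∑ j : Fin m, Algebra.trace F L (x * p.rep * w ^ (j : ℕ)) • α ^ (j : ℕ)) :
    (∀ x y : L, c (x + y) = c x + c y) ∧
    Function.Injective c ∧
    Nat.card (Set.range c) = q ^ (h + r0) ∧
    (∀ x : L, x ≠ 0 → ∃! p : Projectivization F L, c x p = 0) ∧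
    (∀ x : L, x ≠ 0 →
      hammingNorm (c x) = Fintype.card (Projectivization F L) - 1) := by
  obtain rfl : c = traceCode F m α w := funext₂ hc
  have hrm : r0 * m = h := hm ▸ Nat.mul_div_cancel' hdvd
  have hm0 : 0 < m := Nat.pos_of_ne_zero fun hm0 => by
    have hE1 : 1 < q ^ h := hE ▸ Fintype.one_lt_card
    simp [← hrm, hm0] at hE1
  have hrank : finrank F L = m + 1 :=
    finrank_eq_of_card_eq_pow hq hr01 hF (by rw [hL, mul_add, hrm, mul_one])
  have hinj := traceCode_injective (w := w) hα hm0
  have hzero : ∀ x : L, x ≠ 0 → ∃! p, traceCode F m α w x p = 0 := fun x hx =>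
    existsUnique_traceCode_eq_zero hα (linearIndependent_pow_of_forall_eq_pow hw (by omega))
      hrank hx
  refine ⟨map_add _, hinj, ?_, hzero, fun x hx => hammingNorm_eq_card_sub_one_of_existsUnique
    (hzero x hx)⟩
  rw [Nat.card_range_of_injective hinj, Nat.card_eq_fintype_card, hL]
end

section
/- Construction of additive MDS codes with d = 3 from partial spreads: let π_0, π_∞ be h-dimensional F_q-subspaces of F_q^{2h} with F_q^{2h} = π_0 ⊕ π_∞, and suppose π_1, ..., π_k are F_q-subspaces of F_q^{2h} of dimensions r_1, ..., r_k ≤ h such that π_i ∩ π_j = {0} for all distinct i, j ∈ {0, 1, ..., k, ∞}. Then there is an additive code over F_{q^h} of length k + 2, F_q-dimension r = Σ r_i, and minimum distance 3; it is of the form {(u_1, ..., u_k, f(u), g(u)) : u_i ∈ S_i} for additive subgroups S_i ⊆ F_{q^h} with |S_i| = q^{r_i} and F_q-linear maps f, g. -/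
/-!
Since `π i` meets `{0} × K` trivially, it is the graph `{(x, φᵢ x) : x ∈ Sᵢ}` of a linear map on
its first projection `Sᵢ`, and `|Sᵢ| = |π i|`; extend `φᵢ` to all of `K`. Take `f u = ∑ uᵢ` and
`g u = ∑ φᵢ uᵢ`, so that `(f u, g u) = ∑ pᵢ` with `pᵢ = (uᵢ, φᵢ uᵢ) ∈ π i`. A codeword of weight one
gives a single nonzero `pᵢ`, whose coordinates are both nonzero because `π i` also meets `K × {0}`
trivially; a codeword of weight two gives `pᵢ + pⱼ ≠ 0` because `π i ∩ π j = 0`.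
-/

namespace Submodule

section Ring

variable {R M N : Type*} [Ring R] [AddCommGroup M] [Module R M] [AddCommGroup N] [Module R N]
  {P : Submodule R (M × N)} {x : M × N}

theorem eq_zero_of_fst_eq_zero (hP : Disjoint P ((⊥ : Submodule R M).prod ⊤)) (hx : x ∈ P)
    (h : x.1 = 0) : x = 0 :=
  disjoint_def.mp hP x hx (mem_prod.mpr ⟨(mem_bot R).mpr h, mem_top⟩)

theorem eq_zero_of_snd_eq_zero (hP : Disjoint P ((⊤ : Submodule R M).prod ⊥)) (hx : x ∈ P)
    (h : x.2 = 0) : x = 0 :=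
  disjoint_def.mp hP x hx (mem_prod.mpr ⟨mem_top, (mem_bot R).mpr h⟩)

theorem injOn_fst_of_disjoint (hP : Disjoint P ((⊥ : Submodule R M).prod ⊤)) :
    Set.InjOn Prod.fst (P : Set (M × N)) := fun x hx y hy hxy =>
  sub_eq_zero.mp <| eq_zero_of_fst_eq_zero hP (P.sub_mem hx hy) (by simp [hxy])

theorem natCard_map_fst_of_disjoint (hP : Disjoint P ((⊥ : Submodule R M).prod ⊤)) :
    Nat.card (P.map (LinearMap.fst R M N)) = Nat.card P :=
  Nat.card_image_of_injOn (injOn_fst_of_disjoint hP)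

theorem add_ne_zero_of_disjoint {V : Type*} [AddCommGroup V] [Module R V] {P Q : Submodule R V}
    (h : Disjoint P Q) {x y : V} (hx : x ∈ P) (hy : y ∈ Q) (hx0 : x ≠ 0) : x + y ≠ 0 :=
  fun hxy => hx0 <| disjoint_def.mp h x hx <| eq_neg_of_add_eq_zero_left hxy ▸ Q.neg_mem hy

theorem three_le_hammingNorm_fst_add {ι : Type*} [Fintype ι] [DecidableEq M] [DecidableEq N]
    {π : ι → Submodule R (M × N)} (hpair : Pairwise fun i j => Disjoint (π i) (π j))
    (h0 : ∀ i, Disjoint (π i) ((⊥ : Submodule R M).prod ⊤))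
    (hinf : ∀ i, Disjoint (π i) ((⊤ : Submodule R M).prod ⊥))
    {p : ι → M × N} (hp : ∀ i, p i ∈ π i) (hne : (fun i => (p i).1) ≠ 0) :
    3 ≤ hammingNorm (fun i => (p i).1) + (if (∑ i, p i).1 = 0 then 0 else 1) +
      (if (∑ i, p i).2 = 0 then 0 else 1) := by
  classical
  have hzero : ∀ j, (p j).1 = 0 → p j = 0 := fun j => eq_zero_of_fst_eq_zero (h0 j) (hp j)
  obtain h | h | h | h : hammingNorm (fun i => (p i).1) = 0 ∨ hammingNorm (fun i => (p i).1) = 1 ∨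
      hammingNorm (fun i => (p i).1) = 2 ∨ 3 ≤ hammingNorm (fun i => (p i).1) := by omega
  · exact absurd (hammingNorm_eq_zero.mp h) hne
  · obtain ⟨i, hi⟩ := Finset.card_eq_one.mp h
    have hsupp : ∀ j, (p j).1 ≠ 0 ↔ j = i := by simpa [Finset.ext_iff] using hi
    have hsum : ∑ j, p j = p i :=
      Fintype.sum_eq_single i fun j hj => hzero j (not_not.mp ((hsupp j).not.mpr hj))
    have h1 : (p i).1 ≠ 0 := (hsupp i).mpr rfl
    have h2 : (p i).2 ≠ 0 := fun h2 => h1 (by rw [eq_zero_of_snd_eq_zero (hinf i) (hp i) h2]; rfl)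
    simp [h, hsum, h1, h2]
  · obtain ⟨i, j, hij, hT⟩ := Finset.card_eq_two.mp h
    have hsupp : ∀ l, (p l).1 ≠ 0 ↔ l = i ∨ l = j := by simpa [Finset.ext_iff] using hT
    have hsum : ∑ l, p l = p i + p j :=
      Fintype.sum_eq_add i j hij fun l hl => hzero l (not_not.mp ((hsupp l).not.mpr (by tauto)))
    have hi : p i ≠ 0 := fun hi => (hsupp i).mpr (Or.inl rfl) (by rw [hi]; rfl)
    have hsum_ne : (∑ l, p l).1 ≠ 0 ∨ (∑ l, p l).2 ≠ 0 := by
      rw [hsum, ← not_and_or, ← Prod.mk_eq_zero]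
      exact add_ne_zero_of_disjoint (hpair hij) (hp i) (hp j) hi
    rcases hsum_ne with hs | hs <;> simp only [hs, if_false] <;> split_ifs <;> omega
  · omega

end Ring

theorem exists_linearMap_mk_mem_of_disjoint {K M N : Type*} [DivisionRing K] [AddCommGroup M]
    [Module K M] [AddCommGroup N] [Module K N] {P : Submodule K (M × N)}
    (hP : Disjoint P ((⊥ : Submodule K M).prod ⊤)) :
    ∃ φ : M →ₗ[K] N, ∀ x ∈ P.map (LinearMap.fst K M N), (x, φ x) ∈ P := by
  obtain ⟨φ, hφ⟩ := LinearMap.exists_extend P.toLinearPMap.toFun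
  refine ⟨φ, fun x hx => ?_⟩
  have := P.mem_graph_toLinearPMap
    (fun y hy hy1 => congrArg Prod.snd (eq_zero_of_fst_eq_zero hP hy hy1)) ⟨x, hx⟩
  convert this using 2
  exact LinearMap.congr_fun hφ ⟨x, hx⟩

end Submodule

theorem additive_MDS_construction_d3_general
    (q k : ℕ) (rdim : Fin k → ℕ) (Fq K : Type)
    [Field Fq] [Fintype Fq] [Field K] [Fintype K] [DecidableEq K] [Algebra Fq K]
    (hq : Fintype.card Fq = q)
    (π : Fin k → Submodule Fq (K × K))
    (hdim : ∀ i, Module.finrank Fq (π i) = rdim i)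
    (hpair : ∀ i j, i ≠ j → π i ⊓ π j = ⊥)
    (h0 : ∀ i, π i ⊓ (Submodule.prod ⊥ ⊤ : Submodule Fq (K × K)) = ⊥)
    (hinf : ∀ i, π i ⊓ (Submodule.prod ⊤ ⊥ : Submodule Fq (K × K)) = ⊥) :
    ∃ (S : Fin k → Submodule Fq K) (f g : (Fin k → K) →ₗ[Fq] K),
      (∀ i, Nat.card (S i) = q ^ (rdim i)) ∧
      ∀ u : Fin k → K, (∀ i, u i ∈ S i) → u ≠ 0 →
        3 ≤ hammingNorm u + (if f u = 0 then 0 else 1) + (if g u = 0 then 0 else 1) := by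
  have hgraph i : Disjoint (π i) ((⊥ : Submodule Fq K).prod ⊤) := disjoint_iff.mpr (h0 i)
  choose φ hφ using fun i => Submodule.exists_linearMap_mk_mem_of_disjoint (hgraph i)
  let Φ : (Fin k → K) →ₗ[Fq] K × K := ∑ i, (LinearMap.id.prod (φ i)).comp (LinearMap.proj i)
  refine ⟨fun i => (π i).map (LinearMap.fst Fq K K), (LinearMap.fst Fq K K).comp Φ,
    (LinearMap.snd Fq K K).comp Φ, fun i => ?_, fun u hu hu0 => ?_⟩
  · rw [Submodule.natCard_map_fst_of_disjoint (hgraph i), Module.natCard_eq_pow_finrank (K := Fq),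
      Nat.card_eq_fintype_card, hq, hdim i]
  · have hΦ : Φ u = ∑ i, (u i, φ i (u i)) := by simp [Φ]
    simpa [hΦ] using
      Submodule.three_le_hammingNorm_fst_add (fun i j hij => disjoint_iff.mpr (hpair i j hij))
        hgraph (fun i => disjoint_iff.mpr (hinf i)) (fun i => hφ i _ (hu i)) hu0

/-- Construction of additive MDS codes with `d = 3` from partial spreads: identifying
`F_q^{2h}` with `K × K` where `K = F_{q^h}`, if `π₁, …, π_k` are `F_q`-subspaces of `K × K`
of dimensions `r₁, …, r_k ≤ h` pairwise intersecting trivially and meeting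
`π₀ = {0} × K` and `π_∞ = K × {0}` trivially, then there are additive subgroups
`Sᵢ ≤ K` with `|Sᵢ| = q^{rᵢ}` and `F_q`-linear maps `f, g` such that the code
`{(u₁,…,u_k, f(u), g(u)) : uᵢ ∈ Sᵢ}` has minimum Hamming weight at least 3. -/
theorem additive_MDS_construction_d3
    (q h k : ℕ) (rdim : Fin k → ℕ) (Fq K : Type)
    [Field Fq] [Fintype Fq] [Field K] [Fintype K] [DecidableEq K] [Algebra Fq K]
    (hq : Fintype.card Fq = q) (hK : Fintype.card K = q ^ h)
    (hfr : Module.finrank Fq K = h)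
    (π : Fin k → Submodule Fq (K × K))
    (hdim : ∀ i, Module.finrank Fq (π i) = rdim i) (hle : ∀ i, rdim i ≤ h)
    (hpair : ∀ i j, i ≠ j → π i ⊓ π j = ⊥)
    (h0 : ∀ i, π i ⊓ (Submodule.prod ⊥ ⊤ : Submodule Fq (K × K)) = ⊥)
    (hinf : ∀ i, π i ⊓ (Submodule.prod ⊤ ⊥ : Submodule Fq (K × K)) = ⊥) :
    ∃ (S : Fin k → Submodule Fq K) (f g : (Fin k → K) →ₗ[Fq] K),
      (∀ i, Nat.card (S i) = q ^ (rdim i)) ∧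
      ∀ u : Fin k → K, (∀ i, u i ∈ S i) → u ≠ 0 →
        3 ≤ hammingNorm u + (if f u = 0 then 0 else 1) + (if g u = 0 then 0 else 1) :=
  additive_MDS_construction_d3_general q k rdim Fq K hq π hdim hpair h0 hinf
end
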